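/- arXiv:1908.01635 — 5 statements merged into one kernel-verified Lean document; each statement's English description precedes it below -/
import Mathlib

section
/- For every MR-formula φ in the variables p_1,…,p_n there exist finitely many points w_1,…,w_m of finite n-models such that in every Kripke model, φ and the conjunction β(w_1) ∧ … ∧ β(w_m) are true at exactly the same points. In particular, every MR-formula is equivalent over Kripke models to a NNIL-formula, so NNIL-formulas are (up to equivalence) exactly the formulas reflected by monotonic maps. -/
/-! ## Formulas of intuitionistic propositional logic -/

inductive Formula : Type
  | bot : Formula
  | var : ℕ → Formula
  | and : Formula → Formula → Formula
  | or  : Formula → Formula → Formula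
  | imp : Formula → Formula → Formula
  deriving DecidableEq

namespace Formula

def top : Formula := imp bot bot

def iff_ (φ ψ : Formula) : Formula := and (imp φ ψ) (imp ψ φ)

/-- `φ` contains no implication at all. -/
def noImp : Formula → Prop
  | bot => True
  | var _ => True
  | and φ ψ => noImp φ ∧ noImp ψ
  | or φ ψ => noImp φ ∧ noImp ψ
  | imp _ _ => False

/-- NNIL-formulas: no nesting of implications to the left. -/
def IsNNIL : Formula → Prop
  | bot => True
  | var _ => True
  | and φ ψ => IsNNIL φ ∧ IsNNIL ψ
  | or φ ψ => IsNNIL φ ∧ IsNNIL ψ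
  | imp φ ψ => noImp φ ∧ IsNNIL ψ

/-- `φ` is an `n`-formula: all its propositional variables are among `p_0, …, p_{n-1}`. -/
def varsBelow (n : ℕ) : Formula → Prop
  | bot => True
  | var p => p < n
  | and φ ψ => varsBelow n φ ∧ varsBelow n ψ
  | or φ ψ => varsBelow n φ ∧ varsBelow n ψ
  | imp φ ψ => varsBelow n φ ∧ varsBelow n ψ

/-- the propositional variable `p` occurs in the formula -/
def occurs (p : ℕ) : Formula → Prop
  | bot => False
  | var q => q = p
  | and φ ψ => occurs p φ ∨ occurs p ψ
  | or φ ψ => occurs p φ ∨ occurs p ψ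
  | imp φ ψ => occurs p φ ∨ occurs p ψ

/-- uniform substitution -/
def subst (σ : ℕ → Formula) : Formula → Formula
  | bot => bot
  | var p => σ p
  | and φ ψ => and (subst σ φ) (subst σ ψ)
  | or φ ψ => or (subst σ φ) (subst σ ψ)
  | imp φ ψ => imp (subst σ φ) (subst σ ψ)

end Formula

/-- finite conjunction (empty conjunction is ⊤) -/
def listAnd : List Formula → Formula
  | [] => Formula.top
  | φ :: l => Formula.and φ (listAnd l)

/-- finite disjunction (empty disjunction is ⊥) -/
def listOr : List Formula → Formula
  | [] => Formula.bot
  | φ :: l => Formula.or φ (listOr l)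

/-! ## Kripke structures, models and satisfaction -/

/-- raw Kripke structure: worlds, relation, Boolean valuation -/
structure KStruct where
  W : Type
  R : W → W → Prop
  V : W → ℕ → Bool

namespace KStruct

/-- a Kripke model: `R` is a partial order and `V` is persistent -/
def IsModel (M : KStruct) : Prop :=
  (∀ w, M.R w w) ∧
  (∀ w u v, M.R w u → M.R u v → M.R w v) ∧
  (∀ w u, M.R w u → M.R u w → w = u) ∧
  (∀ w u p, M.R w u → M.V w p = true → M.V u p = true)

/-- an `n`-model: a Kripke model whose valuation is restricted to the variables `p_0,…,p_{n-1}` -/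
def IsNModel (M : KStruct) (n : ℕ) : Prop :=
  M.IsModel ∧ ∀ w p, n ≤ p → M.V w p = false

/-- intuitionistic satisfaction -/
def sat (M : KStruct) : M.W → Formula → Prop
  | _, Formula.bot => False
  | w, Formula.var p => M.V w p = true
  | w, Formula.and φ ψ => M.sat w φ ∧ M.sat w ψ
  | w, Formula.or φ ψ => M.sat w φ ∨ M.sat w ψ
  | w, Formula.imp φ ψ => ∀ u, M.R w u → M.sat u φ → M.sat u ψ

/-- the submodel on a subset of the worlds -/
def restrict (M : KStruct) (S : Set M.W) : KStruct where
  W := S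
  R := fun a b => M.R a.1 b.1
  V := fun a p => M.V a.1 p

end KStruct

/-- monotonic map between Kripke structures: preserves the order and the colors -/
def Monotonic (M N : KStruct) (f : M.W → N.W) : Prop :=
  (∀ w u, M.R w u → N.R (f w) (f u)) ∧ (∀ w p, N.V (f w) p = M.V w p)

/-- p-morphism: a monotonic map satisfying the forth condition -/
def PMorphism (M N : KStruct) (f : M.W → N.W) : Prop :=
  Monotonic M N f ∧ ∀ w u', N.R (f w) u' → ∃ u, M.R w u ∧ f u = u'

/-- MR: the class of formulas reflected by monotonic maps between Kripke models -/
def MR (φ : Formula) : Prop :=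
  ∀ (N M : KStruct), N.IsModel → M.IsModel →
    ∀ f : N.W → M.W, Monotonic N M f → ∀ w : N.W, M.sat (f w) φ → N.sat w φ

/-- `r` is a root of `M` -/
def IsRoot (M : KStruct) (r : M.W) : Prop := ∀ w, M.R r w

/-- `M` is tree-like with root `r`: rooted, and each point has a finite,
linearly ordered set of predecessors -/
def IsTree (M : KStruct) (r : M.W) : Prop :=
  IsRoot M r ∧ (∀ w : M.W, {u | M.R u w}.Finite) ∧
  (∀ w u v : M.W, M.R u w → M.R v w → (M.R u v ∨ M.R v u))

/-- `u` is an immediate (proper) successor of `w` -/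
def ImmSucc (M : KStruct) (w u : M.W) : Prop :=
  M.R w u ∧ w ≠ u ∧ ∀ v, M.R w v → M.R v u → v = w ∨ v = u

/-- `S` carries a color-preserving submodel of `M` -/
def ColorPresSub (M : KStruct) (S : Set M.W) : Prop :=
  ∀ w ∈ S, ∀ u, M.R w u → ∃ v ∈ S, M.R w v ∧ ∀ p, M.V v p = M.V u p

/-! ## The β-formulas of finite models -/

/-- the variables among `p_0,…,p_{n-1}` true at `w` -/
def propList (M : KStruct) (n : ℕ) (w : M.W) : List Formula :=
  ((List.range n).filter (fun p => M.V w p)).map Formula.var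

/-- the variables among `p_0,…,p_{n-1}` false at `w` -/
def notpropList (M : KStruct) (n : ℕ) (w : M.W) : List Formula :=
  ((List.range n).filter (fun p => !(M.V w p))).map Formula.var

open Classical in
/-- the immediate successors of `w`, as a list -/
noncomputable def immSuccList (M : KStruct) [Fintype M.W] (w : M.W) : List M.W :=
  (Finset.univ.filter (fun u => ImmSucc M w u)).toList

/-- β(w), defined by recursion on the depth of `w` (computed with enough fuel):
`β(w) = ⋀prop(w) → (⋁notprop(w) ∨ β(w_1) ∨ … ∨ β(w_k))` where the `w_i` are the
immediate successors of `w` (for maximal `w` the last disjunct is the empty disjunction). -/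
noncomputable def betaFuel (M : KStruct) [Fintype M.W] (n : ℕ) : ℕ → M.W → Formula
  | 0, _ => Formula.bot
  | (k+1), w =>
      Formula.imp (listAnd (propList M n w))
        (listOr (notpropList M n w ++ (immSuccList M w).map (fun u => betaFuel M n k u)))

/-- β(w) for a point `w` of a finite `n`-model: `Fintype.card M.W` is an upper bound
for the depth of any point, so the recursion above never runs out of fuel. -/
noncomputable def beta (M : KStruct) [inst : Fintype M.W] (n : ℕ) (w : M.W) : Formula :=
  betaFuel M n (Fintype.card M.W) w

/-! ## Unravelings -/

/-- the unraveling `T_N` of a rooted model `(N, r)`: points are the finite sequences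
`⟨r, w_1, …, w_k⟩` in which each entry is an immediate successor of the preceding one,
ordered by the initial-segment relation; such a sequence satisfies the same variables
as its last entry. -/
def Unravel (M : KStruct) (r : M.W) : KStruct where
  W := {l : List M.W // l.head? = some r ∧ List.Chain' (ImmSucc M) l}
  R := fun σ τ => σ.1 <+: τ.1
  V := fun σ p => (σ.1.getLast?.map (fun w => M.V w p)).getD false

/-! ## Kripke frames -/

structure KFrame where
  W : Type
  R : W → W → Prop

namespace KFrame

/-- a Kripke frame: `R` is a partial order -/
def IsFrame (F : KFrame) : Prop :=
  (∀ w, F.R w w) ∧ (∀ w u v, F.R w u → F.R u v → F.R w v) ∧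
  (∀ w u, F.R w u → F.R u w → w = u)

def Persistent (F : KFrame) (V : F.W → ℕ → Bool) : Prop :=
  ∀ w u p, F.R w u → V w p = true → V u p = true

/-- the model on `F` given by a valuation -/
def model (F : KFrame) (V : F.W → ℕ → Bool) : KStruct := ⟨F.W, F.R, V⟩

/-- `F ⊨ φ` : `φ` is true at every point of every model on `F` -/
def valid (F : KFrame) (φ : Formula) : Prop :=
  ∀ V, F.Persistent V → ∀ w, (F.model V).sat w φ

/-- the substructure of `F` on a subset `S` of its domain, with the restricted order -/
def restrictF (F : KFrame) (S : Set F.W) : KFrame :=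
  ⟨S, fun a b => F.R a.1 b.1⟩

end KFrame

/-- a monotonic map from a model `N` into a frame `F` which is color-consistent:
`f(w) R f(u)` implies `col(w) ≤ col(u)` -/
def ColorConsistentMap (N : KStruct) (F : KFrame) (f : N.W → F.W) : Prop :=
  (∀ w u, N.R w u → F.R (f w) (f u)) ∧
  (∀ w u, F.R (f w) (f u) → ∀ p, N.V w p = true → N.V u p = true)



/-- `χ` is the β-formula of some point of some finite n-model -/
def IsBeta (n : ℕ) (χ : Formula) : Prop :=
  ∃ (P : KStruct) (instP : Fintype P.W), P.IsNModel n ∧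
    ∃ v : P.W, χ = @beta P instP n v

/-!
If `φ ∈ MR` fails at `v` in a finite `n`-model `P` while `β(v)` fails at `w` in `M`, then some
`x ≥ w` realizes `v`: it has the colour of `v` and refutes `β` of every immediate successor of
`v`. The pairs `(x, q)` with `x` realizing `q` form a model mapping monotonically to `M` and by a
p-morphism onto `P`, so `φ`, true at `x`, would be true at `v`. Hence `φ` entails every such
`β(v)`.

Conversely, if `φ` fails at `w`, a selective filtration (keep `w` and, for each kept point, a
witness of each refuted implication subformula `a → b`, moving up only when `a` is false) is a
finite model refuting `φ` at `w` with at most `(k + 1) ^ k` points, `k` the number of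
implication subformulas. It embeds into `M`, so its `β(w)` fails at `w` in `M`. So `φ` is
equivalent to the conjunction of the `β`-formulas of refutations of `φ` in `n`-models on
`Fin m`, `m ≤ (k + 1) ^ k`, a finite list; and each `β` is NNIL once its antecedent is curried.
-/

open Classical

namespace KStruct

variable {M : KStruct}

theorem sat_listAnd {w : M.W} {l : List Formula} :
    M.sat w (listAnd l) ↔ ∀ χ ∈ l, M.sat w χ := by
  induction l with
  | nil => simp [listAnd, Formula.top, sat]
  | cons a l ih => simp [listAnd, sat, ih]

theorem sat_listOr {w : M.W} {l : List Formula} :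
    M.sat w (listOr l) ↔ ∃ χ ∈ l, M.sat w χ := by
  induction l with
  | nil => simp [listOr, sat]
  | cons a l ih => simp [listOr, sat, ih]

theorem sat_mono (hM : M.IsModel) {w u : M.W} (h : M.R w u) {φ : Formula}
    (hs : M.sat w φ) : M.sat u φ := by
  induction φ generalizing w u with
  | bot => exact hs
  | var p => exact hM.2.2.2 w u p h hs
  | and a b iha ihb => exact ⟨iha h hs.1, ihb h hs.2⟩
  | or a b iha ihb => exact hs.imp (iha h) (ihb h)
  | imp a b iha ihb => exact fun v huv hav => hs v (hM.2.1 _ _ _ h huv) hav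

/-- `M` with `p_n, p_{n+1}, …` made false, so that its colours compare with those of `n`-models. -/
def trunc (M : KStruct) (n : ℕ) : KStruct :=
  ⟨M.W, M.R, fun w p => if p < n then M.V w p else false⟩

theorem IsModel.trunc (hM : M.IsModel) (n : ℕ) : (M.trunc n).IsNModel n := by
  refine ⟨⟨hM.1, hM.2.1, hM.2.2.1, fun w u p h hV => ?_⟩, fun w p hp => if_neg (by omega)⟩
  simp only [KStruct.trunc] at hV ⊢
  split_ifs at hV ⊢
  exact hM.2.2.2 w u p h hV

theorem sat_trunc {n : ℕ} {φ : Formula} (hφ : φ.varsBelow n) (w : M.W) :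
    (M.trunc n).sat w φ ↔ M.sat w φ := by
  induction φ generalizing w with
  | bot => exact Iff.rfl
  | var p => simp [sat, KStruct.trunc, show p < n from hφ]
  | and a b iha ihb => exact and_congr (iha hφ.1 w) (ihb hφ.2 w)
  | or a b iha ihb => exact or_congr (iha hφ.1 w) (ihb hφ.2 w)
  | imp a b iha ihb =>
    exact forall_congr' fun u => imp_congr Iff.rfl (imp_congr (iha hφ.1 u) (ihb hφ.2 u))

end KStruct

open KStruct

theorem PMorphism.sat_iff {N P : KStruct} {f : N.W → P.W} (hf : PMorphism N P f)
    (φ : Formula) (w : N.W) : N.sat w φ ↔ P.sat (f w) φ := by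
  induction φ generalizing w with
  | bot => exact Iff.rfl
  | var p => simp [sat, hf.1.2]
  | and a b iha ihb => exact and_congr (iha w) (ihb w)
  | or a b iha ihb => exact or_congr (iha w) (ihb w)
  | imp a b iha ihb =>
    constructor
    · intro h u' hu' ha
      obtain ⟨u, hwu, rfl⟩ := hf.2 w u' hu'
      exact (ihb u).1 (h u hwu ((iha u).2 ha))
    · intro h u hwu ha
      exact (ihb u).2 (h (f u) (hf.1.1 _ _ hwu) ((iha u).1 ha))

theorem varsBelow_listAnd {n : ℕ} {l : List Formula} (h : ∀ χ ∈ l, χ.varsBelow n) :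
    (listAnd l).varsBelow n := by
  induction l with
  | nil => exact ⟨trivial, trivial⟩
  | cons a l ih => exact ⟨h a List.mem_cons_self, ih fun χ hχ => h χ (List.mem_cons_of_mem a hχ)⟩

theorem varsBelow_listOr {n : ℕ} {l : List Formula} (h : ∀ χ ∈ l, χ.varsBelow n) :
    (listOr l).varsBelow n := by
  induction l with
  | nil => trivial
  | cons a l ih => exact ⟨h a List.mem_cons_self, ih fun χ hχ => h χ (List.mem_cons_of_mem a hχ)⟩

section FiniteModel

variable {M P : KStruct} {n : ℕ}

theorem mem_propList {q : P.W} {χ : Formula} :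
    χ ∈ propList P n q ↔ ∃ p < n, P.V q p = true ∧ χ = .var p := by
  simp only [propList, List.mem_map, List.mem_filter, List.mem_range]
  exact ⟨fun ⟨p, h, e⟩ => ⟨p, h.1, h.2, e.symm⟩, fun ⟨p, hp, hv, e⟩ => ⟨p, ⟨hp, hv⟩, e.symm⟩⟩

theorem mem_notpropList {q : P.W} {χ : Formula} :
    χ ∈ notpropList P n q ↔ ∃ p < n, P.V q p = false ∧ χ = .var p := by
  simp only [notpropList, List.mem_map, List.mem_filter, List.mem_range, Bool.not_eq_eq_eq_not,
    Bool.not_true]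
  exact ⟨fun ⟨p, h, e⟩ => ⟨p, h.1, h.2, e.symm⟩, fun ⟨p, hp, hv, e⟩ => ⟨p, ⟨hp, hv⟩, e.symm⟩⟩

theorem sat_listAnd_propList {x : M.W} {q : P.W} :
    M.sat x (listAnd (propList P n q)) ↔ ∀ p < n, P.V q p = true → M.V x p = true := by
  simp only [sat_listAnd, mem_propList]
  exact ⟨fun h p hp hq => h _ ⟨p, hp, hq, rfl⟩, fun h _ ⟨p, hp, hq, e⟩ => e ▸ h p hp hq⟩

theorem forall_not_sat_notpropList {x : M.W} {q : P.W} :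
    (∀ χ ∈ notpropList P n q, ¬ M.sat x χ) ↔ ∀ p < n, P.V q p = false → M.V x p = false := by
  simp only [mem_notpropList]
  exact ⟨fun h p hp hq => by simpa [sat] using h _ ⟨p, hp, hq, rfl⟩,
    fun h _ ⟨p, hp, hq, e⟩ => e ▸ by simp [sat, h p hp hq]⟩

variable [Fintype P.W]

theorem mem_immSuccList {q q' : P.W} : q' ∈ immSuccList P q ↔ ImmSucc P q q' := by
  simp [immSuccList]

noncomputable def above (P : KStruct) [Fintype P.W] (q : P.W) : Finset P.W :=
  Finset.univ.filter fun r => P.R q r ∧ q ≠ r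

theorem card_above_lt_of_R (hP : P.IsModel) {q q' : P.W} (h : P.R q q') (hne : q ≠ q') :
    (above P q').card < (above P q).card := by
  refine Finset.card_lt_card ⟨fun r hr => ?_, fun hsub => ?_⟩
  · simp only [above, Finset.mem_filter, Finset.mem_univ, true_and] at hr ⊢
    exact ⟨hP.2.1 _ _ _ h hr.1, fun hqr => hr.2 (hP.2.2.1 _ _ hr.1 (hqr ▸ h))⟩
  · simpa [above] using hsub (by simp [above, h, hne] : q' ∈ above P q)

theorem card_above_lt_card (q : P.W) : (above P q).card < Fintype.card P.W :=
  Finset.card_lt_univ_of_notMem (x := q) (by simp [above])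

theorem betaFuel_eq_betaFuel (hP : P.IsModel) {k k' : ℕ} {q : P.W}
    (hk : (above P q).card < k) (hk' : (above P q).card < k') :
    betaFuel P n k q = betaFuel P n k' q := by
  induction k generalizing k' q with
  | zero => omega
  | succ k ih =>
    obtain ⟨k', rfl⟩ : ∃ j, k' = j + 1 := ⟨k' - 1, by omega⟩
    simp only [betaFuel]
    congr 3
    refine List.map_congr_left fun q' hq' => ?_
    have := card_above_lt_of_R hP (mem_immSuccList.1 hq').1 (mem_immSuccList.1 hq').2.1
    exact ih (by omega) (by omega)

theorem beta_eq (hP : P.IsModel) (q : P.W) :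
    beta P n q = .imp (listAnd (propList P n q))
      (listOr (notpropList P n q ++ (immSuccList P q).map (beta P n))) := by
  rw [beta, betaFuel_eq_betaFuel hP (card_above_lt_card q) (Nat.lt_succ_self _), betaFuel]
  congr 3
  refine List.map_congr_left fun q' hq' => betaFuel_eq_betaFuel hP ?_ (card_above_lt_card q')
  exact card_above_lt_of_R hP (mem_immSuccList.1 hq').1 (mem_immSuccList.1 hq').2.1

theorem varsBelow_beta (q : P.W) : (beta P n q).varsBelow n := by
  suffices ∀ k q, (betaFuel P n k q).varsBelow n from this _ q
  intro k
  induction k with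
  | zero => exact fun _ => trivial
  | succ k ih =>
    refine fun q => ⟨varsBelow_listAnd fun χ hχ => ?_, varsBelow_listOr fun χ hχ => ?_⟩
    · obtain ⟨p, hp, -, rfl⟩ := mem_propList.1 hχ
      exact hp
    · rcases List.mem_append.1 hχ with h | h
      · obtain ⟨p, hp, -, rfl⟩ := mem_notpropList.1 h
        exact hp
      · obtain ⟨q', -, rfl⟩ := List.mem_map.1 h
        exact ih q'

end FiniteModel

def Realizes (M P : KStruct) [Fintype P.W] (n : ℕ) (x : M.W) (q : P.W) : Prop :=
  (∀ p < n, M.V x p = P.V q p) ∧ ∀ q', ImmSucc P q q' → ¬ M.sat x (beta P n q')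

/-- Only immediate successors in `P` have to be matched. -/
def IsSimulation (M P : KStruct) (Z : M.W → P.W → Prop) : Prop :=
  ∀ x q, Z x q → (∀ p, M.V x p = P.V q p) ∧
    ∀ q', ImmSucc P q q' → ∃ x', M.R x x' ∧ Z x' q'

section Simulation

variable {M P : KStruct} [Fintype P.W] {n : ℕ}

theorem not_sat_beta_iff (hP : P.IsModel) {x : M.W} {q : P.W} :
    ¬ M.sat x (beta P n q) ↔ ∃ x', M.R x x' ∧ Realizes M P n x' q := by
  rw [beta_eq hP]
  simp only [sat, not_forall, sat_listOr, List.mem_append, List.mem_map, mem_immSuccList,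
    not_exists, not_and, exists_prop]
  refine exists_congr fun x' => and_congr_right fun _ => ?_
  rw [sat_listAnd_propList]
  constructor
  · rintro ⟨htrue, hfalse⟩
    have hnot := forall_not_sat_notpropList.1 fun χ hχ => hfalse χ (Or.inl hχ)
    refine ⟨fun p hp => ?_, fun q' hq' => hfalse _ (Or.inr ⟨q', hq', rfl⟩)⟩
    cases hq : P.V q p
    · exact hnot p hp hq
    · exact htrue p hp hq
  · rintro ⟨hcol, hsucc⟩
    refine ⟨fun p hp hq => (hcol p hp).trans hq, fun χ hχ => ?_⟩
    rcases hχ with hχ | ⟨q', hq', rfl⟩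
    · exact forall_not_sat_notpropList.2 (fun p hp hq => (hcol p hp).trans hq) χ hχ
    · exact hsucc q' hq'

theorem isSimulation_realizes (hM : ∀ x p, n ≤ p → M.V x p = false) (hP : P.IsNModel n) :
    IsSimulation M P (Realizes M P n) := by
  refine fun x q ⟨hcol, hsucc⟩ => ⟨fun p => ?_, fun q' hq' => ?_⟩
  · by_cases hp : p < n
    · exact hcol p hp
    · rw [hM x p (by omega), hP.2 q p (by omega)]
  · exact (not_sat_beta_iff hP.1).1 (hsucc q' hq')

theorem not_sat_beta_of_isSimulation (hM : M.IsModel) (hP : P.IsModel)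
    {Z : M.W → P.W → Prop} (hZ : IsSimulation M P Z) {x : M.W} {q : P.W} (h : Z x q) :
    ¬ M.sat x (beta P n q) := by
  refine (not_sat_beta_iff hP).2 ⟨x, hM.1 x, fun p _ => (hZ x q h).1 p, fun q' hq' hsat => ?_⟩
  obtain ⟨x', hxx', hx'⟩ := (hZ x q h).2 q' hq'
  have := card_above_lt_of_R hP hq'.1 hq'.2.1
  exact not_sat_beta_of_isSimulation hM hP hZ hx' (sat_mono hM hxx' hsat)
termination_by (above P q).card

theorem Monotonic.not_sat_beta (hM : M.IsModel) (hP : P.IsModel) {f : P.W → M.W}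
    (hf : Monotonic P M f) (q : P.W) : ¬ M.sat (f q) (beta P n q) :=
  not_sat_beta_of_isSimulation hM hP (Z := fun x q => x = f q)
    (fun _ q h => h ▸ ⟨hf.2 q, fun q' hq' => ⟨f q', hf.1 q q' hq'.1, rfl⟩⟩) rfl

theorem exists_immSucc_of_R (hP : P.IsModel) {q q' : P.W} (h : P.R q q') (hne : q ≠ q') :
    ∃ z, ImmSucc P q z ∧ P.R z q' := by
  obtain ⟨z, hz, hmax⟩ := Finset.exists_max_image
    (Finset.univ.filter fun z => P.R q z ∧ q ≠ z ∧ P.R z q') (fun z => (above P z).card)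
    ⟨q', by simp [h, hne, hP.1 q']⟩
  simp only [Finset.mem_filter, Finset.mem_univ, true_and] at hz hmax
  refine ⟨z, ⟨hz.1, hz.2.1, fun v hqv hvz => ?_⟩, hz.2.2⟩
  by_contra! hv
  have := hmax v ⟨hqv, hv.1.symm, hP.2.1 _ _ _ hvz hz.2.2⟩
  exact absurd (card_above_lt_of_R hP hvz hv.2) (by omega)

theorem IsSimulation.exists_of_R (hM : M.IsModel) (hP : P.IsModel) {Z : M.W → P.W → Prop}
    (hZ : IsSimulation M P Z) {x : M.W} {q q' : P.W} (h : Z x q) (hq : P.R q q') :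
    ∃ x', M.R x x' ∧ Z x' q' := by
  by_cases hne : q = q'
  · exact ⟨x, hM.1 x, hne ▸ h⟩
  obtain ⟨z, hz, hzq'⟩ := exists_immSucc_of_R hP hq hne
  obtain ⟨y, hxy, hy⟩ := (hZ x q h).2 z hz
  have := card_above_lt_of_R hP hz.1 hz.2.1
  obtain ⟨x', hyx', hx'⟩ := hZ.exists_of_R hM hP hy hzq'
  exact ⟨x', hM.2.1 _ _ _ hxy hyx', hx'⟩
termination_by (above P q).card

end Simulation

def simProduct (M P : KStruct) (Z : M.W → P.W → Prop) : KStruct where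
  W := {xq : M.W × P.W // Z xq.1 xq.2}
  R a b := M.R a.1.1 b.1.1 ∧ P.R a.1.2 b.1.2
  V a := P.V a.1.2

section SimProduct

variable {M P : KStruct} {Z : M.W → P.W → Prop}

theorem isModel_simProduct (hM : M.IsModel) (hP : P.IsModel) : (simProduct M P Z).IsModel :=
  ⟨fun _ => ⟨hM.1 _, hP.1 _⟩,
    fun _ _ _ hab hbc => ⟨hM.2.1 _ _ _ hab.1 hbc.1, hP.2.1 _ _ _ hab.2 hbc.2⟩,
    fun _ _ hab hba => Subtype.ext (Prod.ext (hM.2.2.1 _ _ hab.1 hba.1) (hP.2.2.1 _ _ hab.2 hba.2)),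
    fun _ _ p hab hV => hP.2.2.2 _ _ p hab.2 hV⟩

theorem IsSimulation.monotonic_fst (hZ : IsSimulation M P Z) :
    Monotonic (simProduct M P Z) M (·.1.1) :=
  ⟨fun _ _ hab => hab.1, fun a p => (hZ _ _ a.2).1 p⟩

theorem IsSimulation.pmorphism_snd [Fintype P.W] (hM : M.IsModel) (hP : P.IsModel)
    (hZ : IsSimulation M P Z) : PMorphism (simProduct M P Z) P (·.1.2) := by
  refine ⟨⟨fun _ _ hab => hab.2, fun _ _ => rfl⟩, fun a q' hq' => ?_⟩
  obtain ⟨x', hxx', hx'⟩ := hZ.exists_of_R hM hP a.2 hq'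
  exact ⟨⟨(x', q'), hx'⟩, ⟨hxx', hq'⟩, rfl⟩

end SimProduct

theorem sat_beta_of_mr {n : ℕ} {φ : Formula} (hφ : MR φ) (hv : φ.varsBelow n)
    {P : KStruct} [Fintype P.W] (hP : P.IsNModel n) {v : P.W} (hPv : ¬ P.sat v φ)
    {M : KStruct} (hM : M.IsModel) {w : M.W} (hw : M.sat w φ) : M.sat w (beta P n v) := by
  by_contra hnb
  have hM' := hM.trunc n
  obtain ⟨x, hwx, hx⟩ := (not_sat_beta_iff hP.1).1 (mt (sat_trunc (varsBelow_beta v) w).1 hnb)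
  have hZ := isSimulation_realizes hM'.2 hP
  have hx_sat : (M.trunc n).sat x φ := sat_mono hM'.1 hwx ((sat_trunc hv w).2 hw)
  have hN : (simProduct _ P _).sat ⟨(x, v), hx⟩ φ :=
    hφ _ _ (isModel_simProduct hM'.1 hP.1) hM'.1 _ hZ.monotonic_fst _ hx_sat
  exact hPv (((hZ.pmorphism_snd hM'.1 hP.1).sat_iff φ _).1 hN)

def Formula.implications : Formula → Finset (Formula × Formula)
  | .bot | .var _ => ∅
  | .and a b | .or a b => a.implications ∪ b.implications
  | .imp a b => insert (a, b) (a.implications ∪ b.implications)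

theorem sat_iff_of_witnessed {Q M : KStruct} {g : Q.W → M.W} (hg : Monotonic Q M g)
    (hrefl : ∀ i j, M.R (g i) (g j) → Q.R i j) {ψ : Formula}
    (hwit : ∀ ab ∈ ψ.implications, ∀ i, ¬ M.sat (g i) (.imp ab.1 ab.2) →
      ∃ j, M.R (g i) (g j) ∧ M.sat (g j) ab.1 ∧ ¬ M.sat (g j) ab.2)
    (i : Q.W) : Q.sat i ψ ↔ M.sat (g i) ψ := by
  induction ψ generalizing i with
  | bot => exact Iff.rfl
  | var p => simp only [sat, hg.2]
  | and a b iha ihb =>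
    simp only [Formula.implications, Finset.mem_union] at hwit
    exact and_congr (iha (fun ab h => hwit ab (.inl h)) i) (ihb (fun ab h => hwit ab (.inr h)) i)
  | or a b iha ihb =>
    simp only [Formula.implications, Finset.mem_union] at hwit
    exact or_congr (iha (fun ab h => hwit ab (.inl h)) i) (ihb (fun ab h => hwit ab (.inr h)) i)
  | imp a b iha ihb =>
    simp only [Formula.implications, Finset.mem_insert, Finset.mem_union] at hwit
    have iha := iha fun ab h => hwit ab (.inr (.inl h))
    have ihb := ihb fun ab h => hwit ab (.inr (.inr h))
    constructor
    · intro hQ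
      by_contra hM
      obtain ⟨j, hij, hja, hjb⟩ := hwit (a, b) (.inl rfl) i hM
      exact hjb ((ihb j).1 (hQ j (hrefl i j hij) ((iha j).2 hja)))
    · exact fun hM j hij hja => (ihb j).2 (hM (g j) (hg.1 i j hij) ((iha j).1 hja))

section SelectiveFiltration

variable (M : KStruct) (s : Finset (Formula × Formula))

/-- A point above `x` refuting `a → b`. It differs from `x` only if `a` fails at `x` (otherwise
`x` refutes `a → b` itself), so every proper step makes a new antecedent true. -/
noncomputable def witness (x : M.W) (ab : Formula × Formula) : M.W :=
  if h : ¬ M.sat x ab.1 ∧ ∃ y, M.R x y ∧ M.sat y ab.1 ∧ ¬ M.sat y ab.2 then h.2.choose else x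

noncomputable def numFalseAntecedents (x : M.W) : ℕ :=
  (s.filter fun ab => ¬ M.sat x ab.1).card

noncomputable def witnessReach (w : M.W) : ℕ → Finset M.W
  | 0 => {w}
  | k + 1 => (witnessReach w k).biUnion fun x => insert x (s.image (witness M x))

variable {M s}

theorem exists_witness (hM : M.IsModel) {x : M.W} {a b : Formula}
    (h : ¬ M.sat x (.imp a b)) :
    ∃ y, (y = x ∨ y = witness M x (a, b)) ∧ M.R x y ∧ M.sat y a ∧ ¬ M.sat y b := by
  by_cases ha : M.sat x a
  · exact ⟨x, .inl rfl, hM.1 x, ha, fun hb => h fun u hxu _ => sat_mono hM hxu hb⟩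
  · have hex : ¬ M.sat x a ∧ ∃ y, M.R x y ∧ M.sat y a ∧ ¬ M.sat y b := by
      simpa [sat] using And.intro ha h
    refine ⟨_, .inr rfl, ?_⟩
    rw [witness, dif_pos hex]
    exact hex.2.choose_spec

theorem numFalseAntecedents_witness_lt (hM : M.IsModel) {x : M.W} {ab : Formula × Formula}
    (hab : ab ∈ s) (hne : witness M x ab ≠ x) :
    numFalseAntecedents M s (witness M x ab) < numFalseAntecedents M s x := by
  rw [witness] at hne ⊢
  split_ifs at hne ⊢ with h
  · obtain ⟨hxy, hya, -⟩ := h.2.choose_spec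
    refine Finset.card_lt_card ⟨fun cd hcd => ?_, fun hsub => ?_⟩
    · simp only [Finset.mem_filter] at hcd ⊢
      exact ⟨hcd.1, fun hx => hcd.2 (sat_mono hM hxy hx)⟩
    simpa [hya] using hsub (Finset.mem_filter.2 ⟨hab, h.1⟩)
  · exact absurd rfl hne

theorem self_mem_witnessReach (w : M.W) (k : ℕ) : w ∈ witnessReach M s w k := by
  induction k with
  | zero => exact Finset.mem_singleton_self w
  | succ k ih => exact Finset.mem_biUnion.2 ⟨w, ih, Finset.mem_insert_self _ _⟩

theorem card_witnessReach_le (w : M.W) (k : ℕ) :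
    (witnessReach M s w k).card ≤ (s.card + 1) ^ k := by
  induction k with
  | zero => simp [witnessReach]
  | succ k ih =>
    calc (witnessReach M s w (k + 1)).card
        ≤ ∑ x ∈ witnessReach M s w k, (insert x (s.image (witness M x))).card :=
          Finset.card_biUnion_le
      _ ≤ ∑ _x ∈ witnessReach M s w k, (s.card + 1) := Finset.sum_le_sum fun x _ =>
          (Finset.card_insert_le _ _).trans (Nat.succ_le_succ Finset.card_image_le)
      _ ≤ (s.card + 1) ^ (k + 1) := by
          rw [Finset.sum_const, smul_eq_mul, pow_succ]
          exact Nat.mul_le_mul_right _ ih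

theorem mem_witnessReach_succ (hM : M.IsModel) {w x : M.W} {k : ℕ}
    (hx : x ∈ witnessReach M s w (k + 1)) :
    x ∈ witnessReach M s w k ∨
      numFalseAntecedents M s x + (k + 1) ≤ numFalseAntecedents M s w := by
  obtain ⟨y, hy, hxy⟩ := Finset.mem_biUnion.1 hx
  obtain rfl | ⟨ab, hab, rfl⟩ : x = y ∨ ∃ ab ∈ s, witness M y ab = x := by
    simpa [eq_comm] using hxy
  · exact .inl hy
  by_cases hne : witness M y ab = y
  · exact .inl (by rwa [hne])
  have hlt := numFalseAntecedents_witness_lt hM hab hne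
  cases k with
  | zero =>
    rw [witnessReach, Finset.mem_singleton] at hy
    exact .inr (hy ▸ hlt)
  | succ k =>
    rcases mem_witnessReach_succ hM hy with hy' | hle
    · exact .inl (Finset.mem_biUnion.2 ⟨y, hy', Finset.mem_insert_of_mem
        (Finset.mem_image_of_mem _ hab)⟩)
    · exact .inr (by omega)

theorem exists_witness_mem_witnessReach (hM : M.IsModel) {w x : M.W}
    (hx : x ∈ witnessReach M s w s.card) {a b : Formula} (hab : (a, b) ∈ s)
    (h : ¬ M.sat x (.imp a b)) :
    ∃ y ∈ witnessReach M s w s.card, M.R x y ∧ M.sat y a ∧ ¬ M.sat y b := by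
  obtain ⟨y, rfl | rfl, hxy, hya, hyb⟩ := exists_witness hM h
  · exact ⟨_, hx, hxy, hya, hyb⟩
  refine ⟨_, ?_, hxy, hya, hyb⟩
  have hsucc : witness M x (a, b) ∈ witnessReach M s w (s.card + 1) :=
    Finset.mem_biUnion.2 ⟨x, hx, Finset.mem_insert_of_mem (Finset.mem_image_of_mem _ hab)⟩
  refine (mem_witnessReach_succ hM hsucc).resolve_right fun hle => ?_
  have : numFalseAntecedents M s w ≤ s.card := Finset.card_filter_le _ _
  omega

end SelectiveFiltration

abbrev finModel (m n : ℕ) (R : Fin m → Fin m → Bool) (V : Fin m → Fin n → Bool) : KStruct :=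
  ⟨Fin m, fun i j => R i j, fun i p => if h : p < n then V i ⟨p, h⟩ else false⟩

theorem exists_finModel_embedding {M : KStruct} {n : ℕ} (hM : M.IsNModel n) (S : Finset M.W) :
    ∃ (R : Fin S.card → Fin S.card → Bool) (V : Fin S.card → Fin n → Bool)
      (g : Fin S.card → M.W), (finModel S.card n R V).IsNModel n ∧
      Monotonic (finModel S.card n R V) M g ∧
      (∀ i j, M.R (g i) (g j) → (finModel S.card n R V).R i j) ∧ ∀ x, x ∈ S ↔ ∃ i, g i = x := by
  set g : Fin S.card → M.W := fun i => (S.equivFin.symm i).1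
  have hinj : g.Injective := Subtype.val_injective.comp S.equivFin.symm.injective
  set Q := finModel S.card n (fun i j => M.R (g i) (g j)) (fun i p => M.V (g i) p)
  have hR : ∀ i j, Q.R i j ↔ M.R (g i) (g j) := fun i j => decide_eq_true_iff
  have hV : ∀ i p, Q.V i p = M.V (g i) p := by
    intro i p
    by_cases hp : p < n
    · exact dif_pos hp
    · exact (dif_neg hp).trans (hM.2 _ p (by omega)).symm
  refine ⟨_, _, g, ⟨⟨fun i => (hR i i).2 (hM.1.1 _), fun i j k hij hjk => ?_,
    fun i j hij hji => hinj (hM.1.2.2.1 _ _ ((hR i j).1 hij) ((hR j i).1 hji)),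
    fun i j p hij => ?_⟩, fun i p hp => ?_⟩, ⟨fun i j => (hR i j).1, fun i p => (hV i p).symm⟩,
    fun i j => (hR i j).2, fun x => ⟨fun hx => ⟨S.equivFin ⟨x, hx⟩, by simp [g]⟩, ?_⟩⟩
  · exact (hR i k).2 (hM.1.2.1 _ _ _ ((hR i j).1 hij) ((hR j k).1 hjk))
  · rw [hV, hV]
    exact hM.1.2.2.2 _ _ p ((hR i j).1 hij)
  · exact dif_neg (by omega)
  · rintro ⟨i, rfl⟩
    exact (S.equivFin.symm i).2

theorem exists_finModel_refuting {n : ℕ} {φ : Formula} (hv : φ.varsBelow n) {M : KStruct}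
    (hM : M.IsModel) {w : M.W} (hw : ¬ M.sat w φ) :
    ∃ m ≤ (φ.implications.card + 1) ^ φ.implications.card, ∃ R V j,
      (finModel m n R V).IsNModel n ∧ ¬ (finModel m n R V).sat j φ ∧
      ¬ M.sat w (beta (finModel m n R V) n j) := by
  have hM' := hM.trunc n
  set S := witnessReach (M.trunc n) φ.implications w φ.implications.card
  obtain ⟨R, V, g, hQ, hg, hrefl, hS⟩ := exists_finModel_embedding hM' S
  obtain ⟨j, hj⟩ := (hS w).1 (self_mem_witnessReach (M := M.trunc n) w _)
  have htruth := sat_iff_of_witnessed hg hrefl (ψ := φ) (fun ab hab i hi => by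
    obtain ⟨y, hy, hiy, hya, hyb⟩ :=
      exists_witness_mem_witnessReach hM'.1 ((hS _).2 ⟨i, rfl⟩) hab hi
    obtain ⟨k, rfl⟩ := (hS y).1 hy
    exact ⟨k, hiy, hya, hyb⟩) j
  rw [← hj] at hw ⊢
  refine ⟨S.card, card_witnessReach_le (M := M.trunc n) w _, R, V, j, hQ,
    fun h => hw ((sat_trunc hv _).1 (htruth.1 h)), fun h => ?_⟩
  have hβ := (sat_trunc (M := M) (varsBelow_beta (P := finModel S.card n R V) j) (g j)).2 h
  exact hg.not_sat_beta hM'.1 hQ.1 j hβ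

noncomputable def betaCandidates (n B : ℕ) (φ : Formula) : List Formula :=
  (List.range (B + 1)).flatMap fun m =>
    (Finset.univ : Finset ((Fin m → Fin m → Bool) × (Fin m → Fin n → Bool))).toList.flatMap
      fun RV => ((List.finRange m).filter fun j =>
        (finModel m n RV.1 RV.2).IsNModel n ∧ ¬ (finModel m n RV.1 RV.2).sat j φ).map
          (beta (finModel m n RV.1 RV.2) n)

theorem mem_betaCandidates {n B : ℕ} {φ χ : Formula} :
    χ ∈ betaCandidates n B φ ↔ ∃ m ≤ B, ∃ R V j, (finModel m n R V).IsNModel n ∧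
      ¬ (finModel m n R V).sat j φ ∧ beta (finModel m n R V) n j = χ := by
  simp [betaCandidates, and_assoc]

namespace Formula

def Equivalent (φ ψ : Formula) : Prop :=
  ∀ M : KStruct, M.IsModel → ∀ w : M.W, M.sat w φ ↔ M.sat w ψ

def HasNNILForm (φ : Formula) : Prop :=
  ∃ ψ, ψ.IsNNIL ∧ φ.Equivalent ψ

theorem Equivalent.trans {φ ψ χ : Formula} (h₁ : φ.Equivalent ψ) (h₂ : ψ.Equivalent χ) :
    φ.Equivalent χ :=
  fun M hM w => (h₁ M hM w).trans (h₂ M hM w)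

theorem HasNNILForm.of_equivalent {φ ψ : Formula} (h : φ.Equivalent ψ) (hψ : ψ.HasNNILForm) :
    φ.HasNNILForm :=
  let ⟨χ, hχ, hψχ⟩ := hψ
  ⟨χ, hχ, h.trans hψχ⟩

theorem hasNNILForm_listAnd {l : List Formula} (h : ∀ χ ∈ l, χ.HasNNILForm) :
    (listAnd l).HasNNILForm := by
  induction l with
  | nil => exact ⟨top, ⟨trivial, trivial⟩, fun _ _ _ => Iff.rfl⟩
  | cons a l ih =>
    obtain ⟨ψa, ha, hae⟩ := h a List.mem_cons_self
    obtain ⟨ψl, hl, hle⟩ := ih fun χ hχ => h χ (List.mem_cons_of_mem a hχ)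
    exact ⟨.and ψa ψl, ⟨ha, hl⟩, fun M hM w => and_congr (hae M hM w) (hle M hM w)⟩

theorem hasNNILForm_listOr {l : List Formula} (h : ∀ χ ∈ l, χ.HasNNILForm) :
    (listOr l).HasNNILForm := by
  induction l with
  | nil => exact ⟨bot, trivial, fun _ _ _ => Iff.rfl⟩
  | cons a l ih =>
    obtain ⟨ψa, ha, hae⟩ := h a List.mem_cons_self
    obtain ⟨ψl, hl, hle⟩ := ih fun χ hχ => h χ (List.mem_cons_of_mem a hχ)
    exact ⟨.or ψa ψl, ⟨ha, hl⟩, fun M hM w => or_congr (hae M hM w) (hle M hM w)⟩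

theorem equivalent_imp_top (ψ : Formula) : (imp top ψ).Equivalent ψ :=
  fun _ hM w => ⟨fun h => h w (hM.1 w) fun _ _ h => h, fun h _ hwu _ => sat_mono hM hwu h⟩

theorem equivalent_imp_and (a b ψ : Formula) : (imp (and a b) ψ).Equivalent (imp a (imp b ψ)) :=
  fun _ hM _ => ⟨fun h _ hwu ha v huv hb => h v (hM.2.1 _ _ _ hwu huv) ⟨sat_mono hM huv ha, hb⟩,
    fun h u hwu hab => h u hwu hab.1 u (hM.1 u) hab.2⟩

/-- Currying the antecedent: `p₁ ∧ … ∧ pₖ → ψ` is equivalent to `p₁ → … → pₖ → ψ`. -/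
theorem hasNNILForm_imp_listAnd {l : List Formula} (hl : ∀ χ ∈ l, ∃ p, χ = var p)
    {ψ : Formula} (hψ : ψ.HasNNILForm) : (imp (listAnd l) ψ).HasNNILForm := by
  induction l with
  | nil => exact hψ.of_equivalent (equivalent_imp_top ψ)
  | cons a l ih =>
    obtain ⟨p, rfl⟩ := hl a List.mem_cons_self
    obtain ⟨χ, hχ, hle⟩ := ih fun χ hχ => hl χ (List.mem_cons_of_mem _ hχ)
    refine ⟨imp (var p) χ, ⟨trivial, hχ⟩, (equivalent_imp_and _ _ ψ).trans fun M hM w => ?_⟩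
    exact forall_congr' fun u => imp_congr_right fun _ => imp_congr_right fun _ => hle M hM u

end Formula

open Formula in
theorem hasNNILForm_beta {P : KStruct} [Fintype P.W] {n : ℕ} (hP : P.IsModel) (q : P.W) :
    (beta P n q).HasNNILForm := by
  rw [beta_eq hP]
  refine hasNNILForm_imp_listAnd (fun χ hχ => ?_) (hasNNILForm_listOr fun χ hχ => ?_)
  · obtain ⟨p, -, -, rfl⟩ := mem_propList.1 hχ
    exact ⟨p, rfl⟩
  rcases List.mem_append.1 hχ with hχ | hχ
  · obtain ⟨p, -, -, rfl⟩ := mem_notpropList.1 hχ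
    exact ⟨var p, trivial, fun _ _ _ => Iff.rfl⟩
  · obtain ⟨q', hq', rfl⟩ := List.mem_map.1 hχ
    have := card_above_lt_of_R hP (mem_immSuccList.1 hq').1 (mem_immSuccList.1 hq').2.1
    exact hasNNILForm_beta hP q'
termination_by (above P q).card

/-- every MR-formula in `n` variables is equivalent over Kripke models to
a finite conjunction of β-formulas of points of finite n-models; in particular it is
equivalent to a NNIL-formula. -/
theorem mr_formula_is_conjunction_of_betas (n : ℕ) (φ : Formula) (hφ : MR φ)
    (hv : φ.varsBelow n) :
    ∃ l : List Formula, (∀ χ ∈ l, IsBeta n χ) ∧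
      (∀ (M : KStruct), M.IsModel → ∀ w : M.W, (M.sat w φ ↔ M.sat w (listAnd l))) ∧
      ∃ ψ : Formula, ψ.IsNNIL ∧
        ∀ (M : KStruct), M.IsModel → ∀ w : M.W, (M.sat w φ ↔ M.sat w ψ) := by
  set l := betaCandidates n ((φ.implications.card + 1) ^ φ.implications.card) φ
  have hequiv : φ.Equivalent (listAnd l) := by
    refine fun M hM w => ⟨fun hw => sat_listAnd.2 fun χ hχ => ?_, fun hl => ?_⟩
    · obtain ⟨m, -, R, V, j, hQ, hj, rfl⟩ := mem_betaCandidates.1 hχ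
      exact sat_beta_of_mr hφ hv hQ hj hM hw
    · by_contra hw
      obtain ⟨m, hm, R, V, j, hQ, hj, hβ⟩ := exists_finModel_refuting hv hM hw
      exact hβ (sat_listAnd.1 hl _ (mem_betaCandidates.2 ⟨m, hm, R, V, j, hQ, hj, rfl⟩))
  have hbeta : ∀ χ ∈ l, ∃ m R V, (finModel m n R V).IsNModel n ∧ ∃ j,
      beta (finModel m n R V) n j = χ := fun χ hχ => by
    obtain ⟨m, -, R, V, j, hQ, -, hχ⟩ := mem_betaCandidates.1 hχ
    exact ⟨m, R, V, hQ, j, hχ⟩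
  obtain ⟨ψ, hψ, hψe⟩ := Formula.hasNNILForm_listAnd fun χ hχ => by
    obtain ⟨m, R, V, hQ, j, rfl⟩ := hbeta χ hχ
    exact hasNNILForm_beta hQ.1 j
  refine ⟨l, fun χ hχ => ?_, hequiv, ψ, hψ, hequiv.trans hψe⟩
  obtain ⟨m, R, V, hQ, j, rfl⟩ := hbeta χ hχ
  exact ⟨_, inferInstance, hQ, j, rfl⟩
end

section
/- Every tree-like n-model M has a tree-like color-preserving submodel N with the same root such that N has finite depth; in fact, along every chain of distinct points of N the colors strictly increase, so every such chain has length at most n+1. -/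
/-!
Keep only the points `w` that are the first of their color on their branch: no proper predecessor
of `w` has the color of `w`. By persistence colors then strictly increase along the kept points,
which bounds chains by `n + 1`. The kept points form a color-preserving submodel: for a kept `w`
and `w ≤ u`, the points of `[w, u]` colored like `u` form a finite chain, and its least point `v`
is kept, since a same-colored predecessor of `v` either lies in `[w, u]`, against leastness, or
below `w`, and then persistence squeezes the color of `w` between two equal colors, so `v = w`.
-/

lemma exists_forall_rel_of_finite_of_total {α : Type*} {R : α → α → Prop}
    (hrefl : ∀ a, R a a) (htrans : ∀ a b c, R a b → R b c → R a c) {s : Set α} (hs : s.Finite)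
    (hne : s.Nonempty) (htotal : ∀ a ∈ s, ∀ b ∈ s, R a b ∨ R b a) : ∃ v ∈ s, ∀ t ∈ s, R v t := by
  let _ : Preorder α := { le := R, le_refl := hrefl, le_trans := htrans }
  obtain ⟨v, hv⟩ := hs.exists_minimal hne
  exact ⟨v, hv.prop, fun t ht => (htotal v hv.prop t ht).elim id (hv.2 ht)⟩

lemma card_filter_range_lt_of_lt {n : ℕ} {f g : ℕ → Bool} (hfg : f < g)
    (hg : ∀ p, n ≤ p → g p = false) :
    ((Finset.range n).filter (f ·)).card < ((Finset.range n).filter (g ·)).card := by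
  obtain ⟨hle, p, hp⟩ := Pi.lt_def.1 hfg
  simp only [Bool.lt_iff] at hp
  have hpn : p < n := by
    by_contra! h
    simp [hg p h] at hp
  refine Finset.card_lt_card ((Finset.ssubset_iff_of_subset ?_).2 ⟨p, ?_, ?_⟩)
  · exact Finset.monotone_filter_right _ fun q _ => Bool.le_iff_imp.1 (hle q)
  · simp [hpn, hp.2]
  · simp [hp.1]

lemma length_le_of_isChain_lt {n : ℕ} {l : List (ℕ → Bool)} (hl : l.IsChain (· < ·))
    (hvanish : ∀ f ∈ l, ∀ p, n ≤ p → f p = false) : l.length ≤ n + 1 := by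
  set c : (ℕ → Bool) → ℕ := fun f => ((Finset.range n).filter (f ·)).card
  have hchain : (l.map c).IsChain (· < ·) :=
    (List.isChain_map _).2 <| hl.imp_of_mem_imp fun _ g _ hg hfg =>
      card_filter_range_lt_of_lt hfg (hvanish g hg)
  have hnodup : (l.map c).Nodup := (List.isChain_iff_pairwise.1 hchain).imp ne_of_lt
  have hbound : l.map c ⊆ List.range (n + 1) := by
    simp only [List.subset_def, List.mem_map, List.mem_range]
    rintro _ ⟨f, -, rfl⟩
    exact Nat.lt_succ_of_le ((Finset.card_filter_le _ _).trans (Finset.card_range n).le)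
  calc l.length = (l.map c).length := (List.length_map _).symm
    _ ≤ (List.range (n + 1)).length := (hnodup.subperm hbound).length_le
    _ = n + 1 := List.length_range

lemma IsTree.restrict {M : KStruct} {r : M.W} (h : IsTree M r) {S : Set M.W} (hr : r ∈ S) :
    IsTree (M.restrict S) ⟨r, hr⟩ :=
  ⟨fun w => h.1 w.1, fun w => (h.2.1 w.1).preimage Subtype.val_injective.injOn,
    fun w u v => h.2.2 w.1 u.1 v.1⟩

namespace KStruct

variable {M : KStruct}

lemma IsModel.color_mono (hM : M.IsModel) {w u : M.W} (h : M.R w u) : M.V w ≤ M.V u :=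
  fun p => Bool.le_iff_imp.2 (hM.2.2.2 w u p h)

def firstOfColor (M : KStruct) : Set M.W :=
  {w | ∀ u, M.R u w → M.V u = M.V w → u = w}

lemma IsModel.mem_firstOfColor_of_isRoot (hM : M.IsModel) {r : M.W} (hr : IsRoot M r) :
    r ∈ M.firstOfColor :=
  fun u hu _ => hM.2.2.1 u r hu (hr u)

lemma IsModel.color_lt_of_mem_firstOfColor (hM : M.IsModel) {w u : M.W}
    (hu : u ∈ M.firstOfColor) (hwu : M.R w u) (hne : w ≠ u) : M.V w < M.V u :=
  (hM.color_mono hwu).lt_of_ne fun h => hne (hu w hwu h)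

lemma IsModel.colorPresSub_firstOfColor (hM : M.IsModel) (hfin : ∀ w, {u | M.R u w}.Finite)
    (hlin : ∀ w u v, M.R u w → M.R v w → M.R u v ∨ M.R v u) :
    ColorPresSub M M.firstOfColor := by
  have ⟨hrefl, htrans, hanti, _⟩ := hM
  intro w hw u hwu
  obtain ⟨v, ⟨hwv, hvu, hvcol⟩, hleast⟩ :=
    exists_forall_rel_of_finite_of_total hrefl htrans
      (s := {v | M.R w v ∧ M.R v u ∧ M.V v = M.V u}) ((hfin u).subset fun v hv => hv.2.1)
      ⟨u, hwu, hrefl u, rfl⟩ fun a ha b hb => hlin u a b ha.2.1 hb.2.1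
  refine ⟨v, fun x hxv hxcol => ?_, hwv, congrFun hvcol⟩
  rcases hlin v x w hxv hwv with hxw | hwx
  · have hwcol : M.V w = M.V v :=
      le_antisymm (hM.color_mono hwv) (hxcol ▸ hM.color_mono hxw)
    obtain rfl : v = w := hanti v w (hleast w ⟨hrefl w, hwu, hwcol.trans hvcol⟩) hwv
    exact hw x hxv hxcol
  · exact hanti x v hxv (hleast x ⟨hwx, htrans x v u hxv hvu, hxcol.trans hvcol⟩)

end KStruct

/-- every tree-like n-model has a tree-like color-preserving submodel
with the same root in which colors strictly increase along chains of distinct points,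
so every such chain has length at most `n+1` (finite depth). -/
theorem tree_has_finite_depth_color_preserving_submodel (n : ℕ) (M : KStruct)
    (hM : M.IsNModel n) (r : M.W) (htree : IsTree M r) :
    ∃ S : Set M.W, ∃ hr : r ∈ S,
      IsTree (M.restrict S) ⟨r, hr⟩ ∧ ColorPresSub M S ∧
      (∀ w u : M.W, w ∈ S → u ∈ S → M.R w u → w ≠ u →
        ((∀ p, M.V w p = true → M.V u p = true) ∧ ∃ p, M.V w p ≠ M.V u p)) ∧
      (∀ l : List M.W, (∀ w ∈ l, w ∈ S) →
        List.Chain' (fun a b => M.R a b ∧ a ≠ b) l → l.length ≤ n + 1) := by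
  obtain ⟨hModel, hvanish⟩ := hM
  have hr := hModel.mem_firstOfColor_of_isRoot htree.1
  refine ⟨M.firstOfColor, hr, htree.restrict hr,
    hModel.colorPresSub_firstOfColor htree.2.1 htree.2.2, fun w u _ hu hwu hne => ?_,
    fun l hl hchain => ?_⟩
  · have hlt := hModel.color_lt_of_mem_firstOfColor hu hwu hne
    exact ⟨fun p => Bool.le_iff_imp.1 (hlt.le p), Function.ne_iff.1 hlt.ne⟩
  · have hcolors : (l.map M.V).IsChain (· < ·) :=
      (List.isChain_map _).2 <| List.IsChain.imp_of_mem_imp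
        (fun _ u _ hu h => hModel.color_lt_of_mem_firstOfColor (hl u hu) h.1 h.2) hchain
    rw [← List.length_map M.V]
    refine length_le_of_isChain_lt hcolors ?_
    simp only [List.mem_map]
    rintro _ ⟨w, -, rfl⟩
    exact hvanish w
end

section
/- Every rooted n-model M with root r has a finite color-preserving submodel N with the same root r. If moreover M is tree-like, then N can be chosen so that in addition N is the image of M under a surjective monotonic map; consequently (M, r) and (N, r) satisfy the same MR-formulas, and in particular the same NNIL-formulas. -/
/-!
Colors only grow along `R`. For the first part, induct on the number of variables false at `w`:
keep `w` and, for each color other than its own realized above `w`, a finite color-preserving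
submodel through one point of that color above `w`.

In a tree the color changes at most `n` times along a branch. Map `w` to a chosen point above the
image of the last point below `w` of another color, having the same bisimulation type of depth
`n - |col w|` as the lowest point of `w`'s color segment; since the depth drops at every color
change, each image point still realizes the types needed to place the images of the points above.
There are finitely many types of each depth, so the image is finite. The map is monotonic and fixes
the root, and equality of types matches each successor of an image point, in color, by the image of
a point of `M`; so the image is a color-preserving submodel, and the monotonic maps in both
directions transfer MR-formulas at the root.
-/

theorem exists_greatest_of_total {α : Type*} {R : α → α → Prop} (refl : ∀ a, R a a)
    (trans : ∀ {a b c}, R a b → R b c → R a c) {s : Set α} (hs : s.Finite) (hne : s.Nonempty)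
    (total : ∀ a ∈ s, ∀ b ∈ s, R a b ∨ R b a) : ∃ m ∈ s, ∀ a ∈ s, R a m := by
  let _ : Preorder α := { le := R, le_refl := refl, le_trans := @trans }
  obtain ⟨m, hm, hmax⟩ := hs.exists_maximal hne
  exact ⟨m, hm, fun a ha => (total a ha m hm).elim id (hmax ha)⟩

namespace KStruct

variable {M N : KStruct} {n : ℕ}

theorem IsModel.refl (hM : M.IsModel) (w : M.W) : M.R w w := hM.1 w

theorem IsModel.trans (hM : M.IsModel) {w u v : M.W} (hwu : M.R w u) (huv : M.R u v) :
    M.R w v :=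
  hM.2.1 w u v hwu huv

theorem IsModel.antisymm (hM : M.IsModel) {w u : M.W} (hwu : M.R w u) (huw : M.R u w) :
    w = u :=
  hM.2.2.1 w u hwu huw

theorem IsModel.persistent (hM : M.IsModel) {w u : M.W} (hwu : M.R w u) {p : ℕ}
    (hp : M.V w p = true) : M.V u p = true :=
  hM.2.2.2 w u p hwu hp

theorem IsModel.restrict (hM : M.IsModel) (S : Set M.W) : (M.restrict S).IsModel :=
  ⟨fun w => hM.refl w.1, fun _ _ _ => hM.trans,
    fun _ _ hwu huw => Subtype.ext (hM.antisymm hwu huw), fun _ _ _ h => hM.persistent h⟩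

theorem monotonic_val (S : Set M.W) : Monotonic (M.restrict S) M Subtype.val :=
  ⟨fun _ _ h => h, fun _ _ => rfl⟩

theorem sat_of_monotonic_of_noImp {f : N.W → M.W} (hf : Monotonic N M f) {φ : Formula}
    (hφ : φ.noImp) {w : N.W} (h : N.sat w φ) : M.sat (f w) φ := by
  induction φ with
  | bot => exact h
  | var p => exact (hf.2 w p).trans h
  | and φ ψ ihφ ihψ => exact ⟨ihφ hφ.1 h.1, ihψ hφ.2 h.2⟩
  | or φ ψ ihφ ihψ => exact h.imp (ihφ hφ.1) (ihψ hφ.2)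
  | imp => exact hφ.elim

end KStruct

open KStruct

theorem Formula.IsNNIL.mr {φ : Formula} (hφ : φ.IsNNIL) : MR φ := by
  intro N M hN hM f hf w hw
  induction φ generalizing w with
  | bot => exact hw
  | var p => exact (hf.2 w p).symm.trans hw
  | and φ ψ ihφ ihψ => exact ⟨ihφ hφ.1 w hw.1, ihψ hφ.2 w hw.2⟩
  | or φ ψ ihφ ihψ => exact hw.imp (ihφ hφ.1 w) (ihψ hφ.2 w)
  | imp φ ψ _ ihψ =>
    intro u hwu hu
    exact ihψ hφ.2 u (hw (f u) (hf.1 w u hwu) (sat_of_monotonic_of_noImp hf hφ.1 hu))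

theorem MR.sat_iff {φ : Formula} (hφ : MR φ) {M N : KStruct} (hM : M.IsModel) (hN : N.IsModel)
    {f : M.W → N.W} (hf : Monotonic M N f) {g : N.W → M.W} (hg : Monotonic N M g) {w : M.W}
    (hgf : g (f w) = w) : M.sat w φ ↔ N.sat (f w) φ :=
  ⟨fun h => hφ N M hN hM g hg (f w) (by rwa [hgf]), hφ M N hM hN f hf w⟩

namespace KStruct

variable {M : KStruct} {n : ℕ}

def color (M : KStruct) (n : ℕ) (w : M.W) : Finset ℕ := {p ∈ Finset.range n | M.V w p = true}

def weight (M : KStruct) (n : ℕ) (w : M.W) : ℕ := (M.color n w).card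

theorem color_subset (hM : M.IsModel) {w u : M.W} (h : M.R w u) : M.color n w ⊆ M.color n u :=
  Finset.monotone_filter_right _ fun _ _ => hM.persistent h

theorem finite_range_color : (Set.range (M.color n)).Finite :=
  (Finset.range n).powerset.finite_toSet.subset <| by
    rintro _ ⟨w, rfl⟩
    exact Finset.mem_powerset.mpr (Finset.filter_subset _ _)

theorem weight_le (w : M.W) : M.weight n w ≤ n :=
  (Finset.card_filter_le _ _).trans_eq (Finset.card_range n)

theorem weight_mono (hM : M.IsModel) {w u : M.W} (h : M.R w u) : M.weight n w ≤ M.weight n u :=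
  Finset.card_le_card (color_subset hM h)

theorem weight_lt (hM : M.IsModel) {w u : M.W} (h : M.R w u) (hne : M.color n w ≠ M.color n u) :
    M.weight n w < M.weight n u :=
  Finset.card_lt_card ((color_subset hM h).ssubset_of_ne hne)

theorem color_eq_of_weight_le (hM : M.IsModel) {w u : M.W} (h : M.R w u)
    (hle : M.weight n u ≤ M.weight n w) : M.color n w = M.color n u :=
  Finset.eq_of_subset_of_card_le (color_subset hM h) hle

theorem IsNModel.V_eq_of_color_eq (hM : M.IsNModel n) {v u : M.W}
    (h : M.color n v = M.color n u) (p : ℕ) : M.V v p = M.V u p := by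
  by_cases hp : p < n
  · have hmem : p ∈ M.color n v ↔ p ∈ M.color n u := by rw [h]
    simp only [color, Finset.mem_filter, Finset.mem_range, hp, true_and] at hmem
    exact Bool.eq_iff_iff.mpr hmem
  · rw [hM.2 v p (not_lt.mp hp), hM.2 u p (not_lt.mp hp)]

theorem exists_finite_colorPresSub (hM : M.IsNModel n) (w : M.W) :
    ∃ S : Set M.W, S.Finite ∧ w ∈ S ∧ ColorPresSub M S := by
  set C := {c | ∃ u, M.R w u ∧ M.color n u = c ∧ c ≠ M.color n w}
  have hC : C.Finite := finite_range_color.subset fun _ ⟨u, _, hu, _⟩ => ⟨u, hu⟩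
  have hsub : ∀ c ∈ C, ∃ S : Set M.W, S.Finite ∧ ColorPresSub M S ∧
      ∃ v ∈ S, M.R w v ∧ M.color n v = c := by
    rintro _ ⟨u, hwu, rfl, hne⟩
    have hlt := weight_lt hM.1 hwu hne.symm
    obtain ⟨S, hS, huS, hSc⟩ := exists_finite_colorPresSub hM u
    exact ⟨S, hS, hSc, u, huS, hwu, rfl⟩
  choose! S hSfin hSc hSw using hsub
  refine ⟨insert w (⋃ c ∈ C, S c), (hC.biUnion hSfin).insert w, Set.mem_insert _ _, ?_⟩
  rintro x (rfl | hx) u hxu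
  · by_cases hc : M.color n u = M.color n x
    · exact ⟨x, Set.mem_insert _ _, hM.1.refl x, hM.V_eq_of_color_eq hc.symm⟩
    · obtain ⟨v, hv, hxv, hvc⟩ := hSw _ ⟨u, hxu, rfl, hc⟩
      exact ⟨v, Or.inr (Set.mem_biUnion ⟨u, hxu, rfl, hc⟩ hv), hxv, hM.V_eq_of_color_eq hvc⟩
  · obtain ⟨c, hc, hxc⟩ := Set.mem_iUnion₂.mp hx
    obtain ⟨v, hv, hxv, hvu⟩ := hSc c hc x hxc u hxu
    exact ⟨v, Or.inr (Set.mem_biUnion hc hv), hxv, hvu⟩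
termination_by n - M.weight n w
decreasing_by have := weight_le (M := M) (n := n) u; omega

def BisimType : ℕ → Type
  | 0 => Finset ℕ
  | k + 1 => Finset ℕ × Set (BisimType k)

def bisimType (M : KStruct) (n : ℕ) : (k : ℕ) → M.W → BisimType k
  | 0, w => M.color n w
  | k + 1, w => (M.color n w, M.bisimType n k '' {u | M.R w u})

theorem color_eq_of_bisimType_eq : ∀ {k : ℕ} {v w : M.W},
    M.bisimType n k v = M.bisimType n k w → M.color n v = M.color n w
  | 0, _, _, h => h
  | _ + 1, _, _, h => congrArg Prod.fst h

theorem exists_bisimType_eq_of_bisimType_succ_eq {k : ℕ} {v w u : M.W}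
    (h : M.bisimType n (k + 1) v = M.bisimType n (k + 1) w) (hu : M.R v u) :
    ∃ u', M.R w u' ∧ M.bisimType n k u' = M.bisimType n k u := by
  have himage : M.bisimType n k '' {u | M.R v u} = M.bisimType n k '' {u | M.R w u} :=
    congrArg Prod.snd h
  have hmem : M.bisimType n k u ∈ M.bisimType n k '' {u | M.R w u} := himage ▸ ⟨u, hu, rfl⟩
  exact hmem

theorem bisimType_eq_of_bisimType_succ_eq {k : ℕ} {v w : M.W}
    (h : M.bisimType n (k + 1) v = M.bisimType n (k + 1) w) :
    M.bisimType n k v = M.bisimType n k w := by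
  induction k generalizing v w with
  | zero => exact color_eq_of_bisimType_eq h
  | succ k ih =>
    have image_subset : ∀ {v w : M.W}, M.bisimType n (k + 2) v = M.bisimType n (k + 2) w →
        M.bisimType n k '' {u | M.R v u} ⊆ M.bisimType n k '' {u | M.R w u} := by
      rintro v w h _ ⟨u, hu, rfl⟩
      obtain ⟨u', hwu', hu'⟩ := exists_bisimType_eq_of_bisimType_succ_eq h hu
      exact ⟨u', hwu', ih hu'⟩
    exact Prod.ext (color_eq_of_bisimType_eq h) ((image_subset h).antisymm (image_subset h.symm))

theorem bisimType_eq_of_le {j k : ℕ} (hjk : j ≤ k) {v w : M.W}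
    (h : M.bisimType n k v = M.bisimType n k w) : M.bisimType n j v = M.bisimType n j w := by
  induction hjk with
  | refl => exact h
  | step _ ih => exact ih (bisimType_eq_of_bisimType_succ_eq h)

theorem finite_range_bisimType : ∀ k : ℕ, (Set.range (M.bisimType n k)).Finite
  | 0 => finite_range_color
  | k + 1 => (finite_range_color.prod (finite_range_bisimType k).finite_subsets).subset <| by
      rintro _ ⟨w, rfl⟩
      exact ⟨⟨w, rfl⟩, Set.image_subset_range _ _⟩

open Classical in
noncomputable def witness (M : KStruct) (n : ℕ) (v : M.W) (k : ℕ) (e : BisimType k) : M.W :=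
  if h : ∃ u, M.R v u ∧ M.bisimType n k u = e then h.choose else v

theorem witness_spec {v : M.W} {k : ℕ} {e : BisimType k}
    (h : ∃ u, M.R v u ∧ M.bisimType n k u = e) :
    M.R v (M.witness n v k e) ∧ M.bisimType n k (M.witness n v k e) = e := by
  rw [witness, dif_pos h]
  exact h.choose_spec

def SimulatesUpTo (M : KStruct) (n k : ℕ) (x b : M.W) : Prop :=
  ∀ u, M.R b u → ∀ j < k, ∃ u', M.R x u' ∧ M.bisimType n j u' = M.bisimType n j u

section Tree

variable {r : M.W}

theorem _root_.IsTree.total (ht : IsTree M r) {w u v : M.W} (hu : M.R u w) (hv : M.R v w) :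
    M.R u v ∨ M.R v u :=
  ht.2.2 w u v hu hv

theorem _root_.IsTree.exists_greatest (hM : M.IsModel) (ht : IsTree M r) {w : M.W}
    {P : M.W → Prop} (hP : ∃ u, M.R u w ∧ P u) :
    ∃ m, M.R m w ∧ P m ∧ ∀ u, M.R u w → P u → M.R u m :=
  let ⟨m, ⟨hmw, hPm⟩, hmax⟩ := exists_greatest_of_total hM.refl hM.trans
    ((ht.2.1 w).subset fun _ hu => hu.1) hP fun _ ha _ hb => ht.total ha.1 hb.1
  ⟨m, hmw, hPm, fun u hu hPu => hmax u ⟨hu, hPu⟩⟩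

theorem _root_.IsTree.exists_least (hM : M.IsModel) (ht : IsTree M r) {w : M.W}
    {P : M.W → Prop} (hP : ∃ u, M.R u w ∧ P u) :
    ∃ m, M.R m w ∧ P m ∧ ∀ u, M.R u w → P u → M.R m u :=
  let ⟨m, ⟨hmw, hPm⟩, hmin⟩ := exists_greatest_of_total (R := flip M.R) hM.refl
    (fun hab hbc => hM.trans hbc hab) ((ht.2.1 w).subset fun _ hu => hu.1) hP
    fun _ ha _ hb => ht.total hb.1 ha.1
  ⟨m, hmw, hPm, fun u hu hPu => hmin u ⟨hu, hPu⟩⟩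

theorem R_of_weight_lt (hM : M.IsModel) (ht : IsTree M r) {x w u : M.W} (hxu : M.R x u)
    (hwu : M.R w u) (hlt : M.weight n x < M.weight n w) : M.R x w :=
  (ht.total hxu hwu).resolve_right fun hwx => (weight_mono hM hwx).not_gt hlt

/-- `s` is the last point below `w` of another color. -/
def IsColorParent (M : KStruct) (n : ℕ) (w s : M.W) : Prop :=
  M.R s w ∧ M.weight n s < M.weight n w ∧
    ∀ u, M.R u w → M.weight n u < M.weight n w → M.R u s

open Classical in
noncomputable def colorParent (M : KStruct) (n : ℕ) (w : M.W) : M.W :=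
  if h : ∃ s, M.IsColorParent n w s then h.choose else w

theorem colorParent_spec {w : M.W} (h : ∃ s, M.IsColorParent n w s) :
    M.IsColorParent n w (M.colorParent n w) := by
  rw [colorParent, dif_pos h]
  exact h.choose_spec

theorem exists_isColorParent (hM : M.IsModel) (ht : IsTree M r) {s w : M.W} (hsw : M.R s w)
    (hs : M.weight n s < M.weight n w) : ∃ p, M.IsColorParent n w p :=
  ht.exists_greatest hM ⟨s, hsw, hs⟩

theorem IsColorParent.unique (hM : M.IsModel) {w s s' : M.W} (hs : M.IsColorParent n w s)
    (hs' : M.IsColorParent n w s') : s = s' :=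
  hM.antisymm (hs'.2.2 s hs.1 hs.2.1) (hs.2.2 s' hs'.1 hs'.2.1)

theorem isColorParent_iff_of_R (hM : M.IsModel) (ht : IsTree M r) {w u s : M.W}
    (hwu : M.R w u) (hc : M.color n w = M.color n u) :
    M.IsColorParent n w s ↔ M.IsColorParent n u s := by
  have hweight : M.weight n w = M.weight n u := congrArg Finset.card hc
  constructor
  · rintro ⟨hsw, hs, hmax⟩
    exact ⟨hM.trans hsw hwu, by omega,
      fun x hxu hx => hmax x (R_of_weight_lt (n := n) hM ht hxu hwu (by omega)) (by omega)⟩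
  · rintro ⟨hsu, hs, hmax⟩
    exact ⟨R_of_weight_lt (n := n) hM ht hsu hwu (by omega), by omega,
      fun x hxw hx => hmax x (hM.trans hxw hwu) (by omega)⟩

theorem colorParent_eq_of_R (hM : M.IsModel) (ht : IsTree M r) {w u : M.W} (hwu : M.R w u)
    (hc : M.color n w = M.color n u) (h : ∃ s, M.IsColorParent n w s) :
    M.colorParent n w = M.colorParent n u :=
  have hiff := fun s => isColorParent_iff_of_R (s := s) hM ht hwu hc
  ((hiff _).mp (colorParent_spec h)).unique hM (colorParent_spec ((exists_congr hiff).mp h))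

open Classical in
noncomputable def colorBase (M : KStruct) (n : ℕ) (w : M.W) : M.W :=
  if h : ∃ b, M.R b w ∧ M.color n b = M.color n w ∧
      ∀ u, M.R u w → M.color n u = M.color n w → M.R b u then h.choose else w

theorem colorBase_spec (hM : M.IsModel) (ht : IsTree M r) (w : M.W) :
    M.R (M.colorBase n w) w ∧ M.color n (M.colorBase n w) = M.color n w ∧
      ∀ u, M.R u w → M.color n u = M.color n w → M.R (M.colorBase n w) u := by
  have h := ht.exists_least (P := fun b => M.color n b = M.color n w) hM ⟨w, hM.refl w, rfl⟩
  rw [colorBase, dif_pos h]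
  exact h.choose_spec

theorem colorBase_eq_of_R (hM : M.IsModel) (ht : IsTree M r) {w u : M.W} (hwu : M.R w u)
    (hc : M.color n w = M.color n u) : M.colorBase n w = M.colorBase n u := by
  obtain ⟨hbw, hbc, hbmin⟩ := colorBase_spec hM ht (n := n) w
  obtain ⟨hbu, hbuc, hbumin⟩ := colorBase_spec hM ht (n := n) u
  refine hM.antisymm ?_ (hbumin _ (hM.trans hbw hwu) (hbc.trans hc))
  exact (ht.total hbu hwu).elim (fun hbuw => hbmin _ hbuw (hbuc.trans hc.symm)) (hM.trans hbw)

theorem R_colorBase_of_isColorParent (hM : M.IsModel) (ht : IsTree M r) {w s : M.W}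
    (hs : M.IsColorParent n w s) : M.R s (M.colorBase n w) := by
  obtain ⟨hbw, hbc, -⟩ := colorBase_spec hM ht (n := n) w
  have hweight : M.weight n (M.colorBase n w) = M.weight n w := congrArg Finset.card hbc
  have := hs.2.1
  exact R_of_weight_lt (n := n) hM ht hs.1 hbw (by omega)

open Classical in
noncomputable def compress (M : KStruct) (n : ℕ) (r : M.W) (w : M.W) : M.W :=
  if _h : ∃ s, M.IsColorParent n w s then
    M.witness n (M.compress n r (M.colorParent n w)) (n - M.weight n w)
      (M.bisimType n (n - M.weight n w) (M.colorBase n w))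
  else r
termination_by M.weight n w
decreasing_by exact (colorParent_spec _h).2.1

theorem compress_of_exists {w : M.W} (h : ∃ s, M.IsColorParent n w s) :
    M.compress n r w = M.witness n (M.compress n r (M.colorParent n w)) (n - M.weight n w)
      (M.bisimType n (n - M.weight n w) (M.colorBase n w)) := by
  rw [compress, dif_pos h]

theorem compress_of_not_exists {w : M.W} (h : ¬∃ s, M.IsColorParent n w s) :
    M.compress n r w = r := by
  rw [compress, dif_neg h]

theorem finite_image_compress_weight_lt (m : ℕ) :
    (M.compress n r '' {w | M.weight n w < m}).Finite := by
  induction m with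
  | zero => simp
  | succ m ih =>
    refine ((ih.insert r).union (ih.image2 (fun v e => M.witness n v (n - m) e)
      (finite_range_bisimType (M := M) (n := n) _))).subset ?_
    rintro _ ⟨w, hw, rfl⟩
    rcases Nat.lt_succ_iff_lt_or_eq.mp hw with hlt | rfl
    · exact Or.inl (Or.inr ⟨w, hlt, rfl⟩)
    by_cases h : ∃ s, M.IsColorParent n w s
    · rw [compress_of_exists h]
      exact Or.inr ⟨_, ⟨_, (colorParent_spec h).2.1, rfl⟩, _, ⟨_, rfl⟩, rfl⟩
    · rw [compress_of_not_exists h]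
      exact Or.inl (Or.inl rfl)

theorem finite_range_compress : (Set.range (M.compress n r)).Finite :=
  (finite_image_compress_weight_lt (n + 1)).subset <| by
    rintro _ ⟨w, rfl⟩
    exact ⟨w, Nat.lt_succ_of_le (weight_le w), rfl⟩

section Model

variable (hM : M.IsModel) (ht : IsTree M r)
include hM ht

theorem compress_eq_of_R {w u : M.W} (hwu : M.R w u) (hc : M.color n w = M.color n u) :
    M.compress n r w = M.compress n r u := by
  have hiff := exists_congr fun s => isColorParent_iff_of_R (s := s) hM ht hwu hc
  have hweight : M.weight n w = M.weight n u := congrArg Finset.card hc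
  by_cases h : ∃ s, M.IsColorParent n w s
  · rw [compress_of_exists h, compress_of_exists (hiff.mp h), colorParent_eq_of_R hM ht hwu hc h,
      colorBase_eq_of_R hM ht hwu hc, hweight]
  · rw [compress_of_not_exists h, compress_of_not_exists (hiff.not.mp h)]

theorem compress_colorBase (w : M.W) : M.compress n r (M.colorBase n w) = M.compress n r w :=
  compress_eq_of_R hM ht (colorBase_spec hM ht w).1 (colorBase_spec hM ht w).2.1

theorem compress_spec_of_simulatesUpTo {w : M.W} (h : ∃ s, M.IsColorParent n w s)
    (hsim : M.SimulatesUpTo n (n - M.weight n (M.colorParent n w))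
      (M.compress n r (M.colorParent n w)) (M.colorBase n (M.colorParent n w))) :
    M.R (M.compress n r (M.colorParent n w)) (M.compress n r w) ∧
      M.bisimType n (n - M.weight n w) (M.compress n r w) =
        M.bisimType n (n - M.weight n w) (M.colorBase n w) := by
  have hs := colorParent_spec h
  have := weight_le (M := M) (n := n) w
  have := hs.2.1
  rw [compress_of_exists h]
  exact witness_spec <| hsim _
    (hM.trans (colorBase_spec hM ht _).1 (R_colorBase_of_isColorParent hM ht hs)) _ (by omega)

theorem simulatesUpTo_compress (w : M.W) :
    M.SimulatesUpTo n (n - M.weight n w) (M.compress n r w) (M.colorBase n w) := by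
  intro u hu j hj
  by_cases h : ∃ s, M.IsColorParent n w s
  · have htype := (compress_spec_of_simulatesUpTo hM ht h
      (simulatesUpTo_compress (M.colorParent n w))).2
    exact exists_bisimType_eq_of_bisimType_succ_eq (bisimType_eq_of_le hj htype.symm) hu
  · rw [compress_of_not_exists h]
    exact ⟨u, ht.1 u, rfl⟩
termination_by M.weight n w
decreasing_by exact (colorParent_spec h).2.1

theorem compress_spec {w : M.W} (h : ∃ s, M.IsColorParent n w s) :
    M.R (M.compress n r (M.colorParent n w)) (M.compress n r w) ∧
      M.bisimType n (n - M.weight n w) (M.compress n r w) =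
        M.bisimType n (n - M.weight n w) (M.colorBase n w) :=
  compress_spec_of_simulatesUpTo hM ht h (simulatesUpTo_compress hM ht _)

theorem color_compress (w : M.W) : M.color n (M.compress n r w) = M.color n w := by
  by_cases h : ∃ s, M.IsColorParent n w s
  · exact (color_eq_of_bisimType_eq (compress_spec hM ht h).2).trans (colorBase_spec hM ht w).2.1
  · rw [compress_of_not_exists h]
    exact color_eq_of_weight_le hM (ht.1 w)
      (not_lt.mp fun hlt => h (exists_isColorParent hM ht (ht.1 w) hlt))

theorem compress_root : M.compress n r r = r :=
  compress_of_not_exists fun ⟨s, hsr, hs, _⟩ => by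
    obtain rfl := hM.antisymm hsr (ht.1 s)
    exact lt_irrefl _ hs

theorem compress_mono {w u : M.W} (hwu : M.R w u) :
    M.R (M.compress n r w) (M.compress n r u) := by
  by_cases hc : M.color n w = M.color n u
  · rw [compress_eq_of_R hM ht hwu hc]
    exact hM.refl _
  have hlt := weight_lt hM hwu hc
  have hs := colorParent_spec (exists_isColorParent hM ht hwu hlt)
  exact hM.trans (compress_mono (hs.2.2 w hwu hlt))
    (compress_spec hM ht (exists_isColorParent hM ht hwu hlt)).1
termination_by M.weight n u
decreasing_by exact hs.2.1

end Model

theorem colorPresSub_range_compress (hM : M.IsNModel n) (ht : IsTree M r) :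
    ColorPresSub M (Set.range (M.compress n r)) := by
  rintro _ ⟨w, rfl⟩ u hu
  suffices ∃ u', M.R (M.compress n r w) (M.compress n r u') ∧ M.color n u' = M.color n u by
    obtain ⟨u', hu', hc⟩ := this
    exact ⟨_, ⟨u', rfl⟩, hu', hM.V_eq_of_color_eq ((color_compress hM.1 ht u').trans hc)⟩
  by_cases hc : M.color n (M.compress n r w) = M.color n u
  · exact ⟨w, hM.1.refl _, (color_compress hM.1 ht w).symm.trans hc⟩
  by_cases h : ∃ s, M.IsColorParent n w s
  · have hlt := weight_lt hM.1 hu hc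
    have hweight : M.weight n (M.compress n r w) = M.weight n w :=
      congrArg Finset.card (color_compress hM.1 ht w)
    have := weight_le (M := M) (n := n) u
    obtain ⟨j, hj⟩ : ∃ j, n - M.weight n w = j + 1 := ⟨n - M.weight n w - 1, by omega⟩
    have htype := (compress_spec hM.1 ht h).2
    rw [hj] at htype
    obtain ⟨u', hu', htu⟩ := exists_bisimType_eq_of_bisimType_succ_eq htype hu
    exact ⟨u', compress_colorBase hM.1 ht w ▸ compress_mono hM.1 ht hu',
      color_eq_of_bisimType_eq htu⟩
  · refine ⟨u, ?_, rfl⟩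
    rw [(compress_of_not_exists h).trans (compress_root hM.1 ht).symm]
    exact compress_mono hM.1 ht (ht.1 u)

theorem monotonic_rangeFactorization_compress (hM : M.IsNModel n) (ht : IsTree M r) :
    Monotonic M (M.restrict (Set.range (M.compress n r)))
      (Set.rangeFactorization (M.compress n r)) :=
  ⟨fun _ _ => compress_mono hM.1 ht, fun w => hM.V_eq_of_color_eq (color_compress hM.1 ht w)⟩

end Tree

end KStruct

theorem rooted_model_has_finite_color_preserving_submodel_general (n : ℕ) (M : KStruct)
    (hM : M.IsNModel n) (r : M.W) :
    (∃ S : Set M.W, S.Finite ∧ r ∈ S ∧ ColorPresSub M S) ∧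
    (IsTree M r → ∃ S : Set M.W, S.Finite ∧ ∃ hrS : r ∈ S, ColorPresSub M S ∧
      (∃ f : M.W → (M.restrict S).W, Monotonic M (M.restrict S) f ∧
        Function.Surjective f) ∧
      (∀ φ : Formula, MR φ → (M.sat r φ ↔ (M.restrict S).sat ⟨r, hrS⟩ φ)) ∧
      (∀ φ : Formula, φ.IsNNIL → (M.sat r φ ↔ (M.restrict S).sat ⟨r, hrS⟩ φ))) := by
  refine ⟨exists_finite_colorPresSub hM r, fun ht => ?_⟩
  set f := Set.rangeFactorization (M.compress n r)
  have hf := monotonic_rangeFactorization_compress hM ht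
  have hrS : r ∈ Set.range (M.compress n r) := ⟨r, compress_root hM.1 ht⟩
  have hMR : ∀ φ : Formula, MR φ → (M.sat r φ ↔ (M.restrict _).sat ⟨r, hrS⟩ φ) := by
    intro φ hφ
    have hfr : f r = ⟨r, hrS⟩ := Subtype.ext (compress_root hM.1 ht)
    rw [← hfr]
    exact hφ.sat_iff hM.1 (hM.1.restrict _) hf (monotonic_val _) (compress_root hM.1 ht)
  exact ⟨_, finite_range_compress, hrS, colorPresSub_range_compress hM ht,
    ⟨f, hf, Set.rangeFactorization_surjective⟩, hMR, fun φ hφ => hMR φ hφ.mr⟩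

/-- every rooted n-model has a finite color-preserving submodel with the
same root; if the model is tree-like the submodel can moreover be chosen to be a
surjective monotonic image of it, so that root satisfaction of MR-formulas (in
particular of NNIL-formulas) is unchanged. -/
theorem rooted_model_has_finite_color_preserving_submodel (n : ℕ) (M : KStruct)
    (hM : M.IsNModel n) (r : M.W) (hr : IsRoot M r) :
    (∃ S : Set M.W, S.Finite ∧ r ∈ S ∧ ColorPresSub M S) ∧
    (IsTree M r → ∃ S : Set M.W, S.Finite ∧ ∃ hrS : r ∈ S, ColorPresSub M S ∧
      (∃ f : M.W → (M.restrict S).W, Monotonic M (M.restrict S) f ∧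
        Function.Surjective f) ∧
      (∀ φ : Formula, MR φ → (M.sat r φ ↔ (M.restrict S).sat ⟨r, hrS⟩ φ)) ∧
      (∀ φ : Formula, φ.IsNNIL → (M.sat r φ ↔ (M.restrict S).sat ⟨r, hrS⟩ φ))) :=
  rooted_model_has_finite_color_preserving_submodel_general n M hM r
end

section
/- For every IPC-formula φ and every Kripke frame F: F ⊨ φ if and only if F ⊨ φ', where φ' = φ'_+ → s_φ is the frame-normal form of φ. Hence every IPC-formula is frame-equivalent to a formula of implication complexity at most 2. -/
/-- `s_ψ`: the formula `ψ` itself for a variable or `⊥`, and the fresh variable `s ψ`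
for a compound formula `ψ` -/
def svar (s : Formula → ℕ) : Formula → Formula
  | Formula.bot => Formula.bot
  | Formula.var p => Formula.var p
  | Formula.and φ ψ => Formula.var (s (Formula.and φ ψ))
  | Formula.or φ ψ => Formula.var (s (Formula.or φ ψ))
  | Formula.imp φ ψ => Formula.var (s (Formula.imp φ ψ))

/-- `φ'_+` of the frame-normal form construction -/
def plusForm (s : Formula → ℕ) : Formula → Formula
  | Formula.bot => Formula.top
  | Formula.var _ => Formula.top
  | Formula.and φ ψ => Formula.and (plusForm s φ) (Formula.and (plusForm s ψ)
      (Formula.iff_ (Formula.and (svar s φ) (svar s ψ)) (svar s (Formula.and φ ψ))))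
  | Formula.or φ ψ => Formula.and (plusForm s φ) (Formula.and (plusForm s ψ)
      (Formula.iff_ (Formula.or (svar s φ) (svar s ψ)) (svar s (Formula.or φ ψ))))
  | Formula.imp φ ψ => Formula.and (plusForm s φ) (Formula.and (plusForm s ψ)
      (Formula.iff_ (Formula.imp (svar s φ) (svar s ψ)) (svar s (Formula.imp φ ψ))))

/-- the frame-normal form `φ' = φ'_+ → s_φ` -/
def frameNF (s : Formula → ℕ) (φ : Formula) : Formula :=
  Formula.imp (plusForm s φ) (svar s φ)

/-!
`φ'_+` forces `s_ψ ↔ ψ` for every subformula `ψ` of `φ` at all points above one where it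
holds, so a point refuting `φ'` refutes `φ`. Conversely, the substitution `s_ψ ↦ ψ` turns
`φ'` into `(a conjunction of trivial equivalences χ ↔ χ) → φ`, and validity on a frame is
closed under substitution.
-/

namespace KStruct

theorem sat_mono_s18 (M : KStruct) (htrans : ∀ w u v, M.R w u → M.R u v → M.R w v)
    (hV : ∀ w u p, M.R w u → M.V w p = true → M.V u p = true) :
    ∀ {φ : Formula} {w u : M.W}, M.R w u → M.sat w φ → M.sat u φ
  | .bot, _, _, _, h => h
  | .var p, _, _, hwu, h => hV _ _ p hwu h
  | .and _ _, _, _, hwu, h => ⟨sat_mono_s18 M htrans hV hwu h.1, sat_mono_s18 M htrans hV hwu h.2⟩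
  | .or _ _, _, _, hwu, h => h.imp (sat_mono_s18 M htrans hV hwu) (sat_mono_s18 M htrans hV hwu)
  | .imp _ _, _, _, hwu, h => fun t hut => h t (htrans _ _ _ hwu hut)

theorem sat_iff_self (M : KStruct) (w : M.W) (φ : Formula) : M.sat w (φ.iff_ φ) :=
  ⟨fun _ _ h => h, fun _ _ h => h⟩

theorem sat_svar_iff_of_sat_plusForm (M : KStruct)
    (htrans : ∀ w u v, M.R w u → M.R u v → M.R w v) (s : Formula → ℕ) :
    ∀ {ψ : Formula} {u : M.W}, M.sat u (plusForm s ψ) →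
      ∀ {v : M.W}, M.R u v → (M.sat v (svar s ψ) ↔ M.sat v ψ)
  | .bot, _, _, _, _ => Iff.rfl
  | .var _, _, _, _, _ => Iff.rfl
  | .and φ χ, _, ⟨hφ, hχ, hmp, hmpr⟩, v, huv =>
    (show M.sat v (svar s (φ.and χ)) ↔ M.sat v ((svar s φ).and (svar s χ)) from
      ⟨hmpr v huv, hmp v huv⟩).trans <|
      and_congr (sat_svar_iff_of_sat_plusForm M htrans s hφ huv)
        (sat_svar_iff_of_sat_plusForm M htrans s hχ huv)
  | .or φ χ, _, ⟨hφ, hχ, hmp, hmpr⟩, v, huv =>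
    (show M.sat v (svar s (φ.or χ)) ↔ M.sat v ((svar s φ).or (svar s χ)) from
      ⟨hmpr v huv, hmp v huv⟩).trans <|
      or_congr (sat_svar_iff_of_sat_plusForm M htrans s hφ huv)
        (sat_svar_iff_of_sat_plusForm M htrans s hχ huv)
  | .imp φ χ, _, ⟨hφ, hχ, hmp, hmpr⟩, v, huv =>
    (show M.sat v (svar s (φ.imp χ)) ↔ M.sat v ((svar s φ).imp (svar s χ)) from
      ⟨hmpr v huv, hmp v huv⟩).trans <|
      forall_congr' fun _ => forall_congr' fun hvt =>
        imp_congr (sat_svar_iff_of_sat_plusForm M htrans s hφ (htrans _ _ _ huv hvt))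
          (sat_svar_iff_of_sat_plusForm M htrans s hχ (htrans _ _ _ huv hvt))

end KStruct

namespace KFrame

open Classical in
theorem sat_subst_iff (F : KFrame) (V : F.W → ℕ → Bool) (σ : ℕ → Formula) :
    ∀ (φ : Formula) (w : F.W), (F.model V).sat w (φ.subst σ) ↔
      (F.model fun u p => decide ((F.model V).sat u (σ p))).sat w φ
  | .bot, _ => Iff.rfl
  | .var _, _ => decide_eq_true_iff.symm
  | .and φ χ, w => and_congr (sat_subst_iff F V σ φ w) (sat_subst_iff F V σ χ w)
  | .or φ χ, w => or_congr (sat_subst_iff F V σ φ w) (sat_subst_iff F V σ χ w)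
  | .imp φ χ, _ => forall_congr' fun u => forall_congr' fun _ =>
      imp_congr (sat_subst_iff F V σ φ u) (sat_subst_iff F V σ χ u)

open Classical in
theorem valid_subst {F : KFrame} (htrans : ∀ w u v, F.R w u → F.R u v → F.R w v)
    {φ : Formula} (h : F.valid φ) (σ : ℕ → Formula) : F.valid (φ.subst σ) := by
  intro V hV w
  refine (F.sat_subst_iff V σ φ w).2 (h (fun u p => decide ((F.model V).sat u (σ p))) ?_ w)
  intro u v p huv hp
  exact decide_eq_true <| (F.model V).sat_mono_s18 htrans hV huv (of_decide_eq_true hp)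

end KFrame

noncomputable def svarSubst (s : Formula → ℕ) : ℕ → Formula :=
  Function.extend s id Formula.var

theorem subst_svarSubst_svar {s : Formula → ℕ} (hinj : Function.Injective s) {ψ : Formula}
    (hfresh : ∀ χ : Formula, ¬ ψ.occurs (s χ)) : (svar s ψ).subst (svarSubst s) = ψ := by
  cases ψ with
  | bot => rfl
  | var p => exact Function.extend_apply' _ _ _ fun ⟨χ, hχ⟩ => hfresh χ hχ.symm
  | and => exact hinj.extend_apply _ _ _
  | or => exact hinj.extend_apply _ _ _
  | imp => exact hinj.extend_apply _ _ _

theorem sat_subst_svarSubst_plusForm {s : Formula → ℕ} (hinj : Function.Injective s)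
    (M : KStruct) (w : M.W) :
    ∀ {ψ : Formula}, (∀ χ : Formula, ¬ ψ.occurs (s χ)) →
      M.sat w ((plusForm s ψ).subst (svarSubst s))
  | .bot, _ => fun _ _ h => h
  | .var _, _ => fun _ _ h => h
  | .and φ χ, hfresh | .or φ χ, hfresh | .imp φ χ, hfresh => by
    have hφ : ∀ ξ : Formula, ¬ φ.occurs (s ξ) := fun ξ h => hfresh ξ (Or.inl h)
    have hχ : ∀ ξ : Formula, ¬ χ.occurs (s ξ) := fun ξ h => hfresh ξ (Or.inr h)
    refine ⟨sat_subst_svarSubst_plusForm hinj M w hφ,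
      sat_subst_svarSubst_plusForm hinj M w hχ, ?_⟩
    simp only [Formula.subst, Formula.iff_, subst_svarSubst_svar hinj hφ,
      subst_svarSubst_svar hinj hχ, subst_svarSubst_svar hinj hfresh]
    exact M.sat_iff_self w _

/-- a Kripke frame validates `φ` iff it validates its frame-normal form
`φ' = φ'_+ → s_φ` (for any choice of pairwise distinct fresh variables `s_ψ`). -/
theorem frame_normal_form (φ : Formula) (s : Formula → ℕ)
    (hinj : Function.Injective s)
    (hfresh : ∀ χ : Formula, ¬ Formula.occurs (s χ) φ)
    (F : KFrame) (hF : F.IsFrame) :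
    F.valid φ ↔ F.valid (frameNF s φ) := by
  obtain ⟨hrefl, htrans, -⟩ := hF
  constructor
  · intro hφ V hV _ u _ hplus
    exact ((F.model V).sat_svar_iff_of_sat_plusForm htrans s hplus (hrefl u)).2 (hφ V hV u)
  · intro hNF V hV w
    have hsubst := KFrame.valid_subst htrans hNF (svarSubst s) V hV w w (hrefl w) <|
      sat_subst_svarSubst_plusForm hinj _ w hfresh
    rwa [subst_svarSubst_svar hinj hfresh] at hsubst
end

section
/- Let Γ be a set of NNIL-formulas and let L = IPC + Γ be the intermediate logic axiomatized by Γ, i.e., the smallest set of IPC-formulas containing all theorems of IPC and all members of Γ that is closed under modus ponens and uniform substitution. If φ ∉ L, then there is a finite Kripke frame F that validates every formula of L and a model on F at one of whose points φ fails. In particular, every intermediate logic axiomatized by NNIL-formulas has the finite model property. -/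
/-- derivability in the intermediate logic `IPC + Ax`: a Hilbert-style system for
intuitionistic propositional logic together with the extra axioms `Ax`, closed under
modus ponens and uniform substitution -/
inductive Deriv (Ax : Set Formula) : Formula → Prop
  | axK (φ ψ : Formula) : Deriv Ax (φ.imp (ψ.imp φ))
  | axS (φ ψ χ : Formula) :
      Deriv Ax ((φ.imp (ψ.imp χ)).imp ((φ.imp ψ).imp (φ.imp χ)))
  | axAndI (φ ψ : Formula) : Deriv Ax (φ.imp (ψ.imp (φ.and ψ)))
  | axAndL (φ ψ : Formula) : Deriv Ax ((φ.and ψ).imp φ)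
  | axAndR (φ ψ : Formula) : Deriv Ax ((φ.and ψ).imp ψ)
  | axOrL (φ ψ : Formula) : Deriv Ax (φ.imp (φ.or ψ))
  | axOrR (φ ψ : Formula) : Deriv Ax (ψ.imp (φ.or ψ))
  | axOrE (φ ψ χ : Formula) :
      Deriv Ax ((φ.imp χ).imp ((ψ.imp χ).imp ((φ.or ψ).imp χ)))
  | axBot (φ : Formula) : Deriv Ax (Formula.bot.imp φ)
  | hyp (φ : Formula) : φ ∈ Ax → Deriv Ax φ
  | mp (φ ψ : Formula) : Deriv Ax (φ.imp ψ) → Deriv Ax φ → Deriv Ax ψ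
  | subst (φ : Formula) (σ : ℕ → Formula) : Deriv Ax φ → Deriv Ax (φ.subst σ)

namespace FMPAux
open Formula

variable {Ax : Set Formula}

lemma dId (φ : Formula) : Deriv Ax (φ.imp φ) :=
  .mp _ _ (.mp _ _ (.axS φ (φ.imp φ) φ) (.axK φ (φ.imp φ))) (.axK φ φ)

lemma dTop : Deriv Ax Formula.top := dId _

lemma dConst {ψ : Formula} (φ : Formula) (h : Deriv Ax ψ) : Deriv Ax (φ.imp ψ) :=
  .mp _ _ (.axK ψ φ) h

lemma dApCtx {A φ ψ : Formula} (h1 : Deriv Ax (A.imp (φ.imp ψ)))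
    (h2 : Deriv Ax (A.imp φ)) : Deriv Ax (A.imp ψ) :=
  .mp _ _ (.mp _ _ (.axS A φ ψ) h1) h2

lemma dTrans {φ ψ χ : Formula} (h1 : Deriv Ax (φ.imp ψ)) (h2 : Deriv Ax (ψ.imp χ)) :
    Deriv Ax (φ.imp χ) := dApCtx (dConst φ h2) h1

lemma dApCtx2 {A B φ ψ : Formula} (h1 : Deriv Ax (A.imp (B.imp (φ.imp ψ))))
    (h2 : Deriv Ax (A.imp (B.imp φ))) : Deriv Ax (A.imp (B.imp ψ)) :=
  dApCtx (dApCtx (dConst A (.axS B φ ψ)) h1) h2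

lemma dAndICtx {A φ ψ : Formula} (h1 : Deriv Ax (A.imp φ)) (h2 : Deriv Ax (A.imp ψ)) :
    Deriv Ax (A.imp (φ.and ψ)) :=
  dApCtx (dApCtx (dConst A (.axAndI φ ψ)) h1) h2

lemma dAndICtx2 {A B φ ψ : Formula} (h1 : Deriv Ax (A.imp (B.imp φ)))
    (h2 : Deriv Ax (A.imp (B.imp ψ))) : Deriv Ax (A.imp (B.imp (φ.and ψ))) :=
  dApCtx2 (dApCtx2 (dConst A (dConst B (.axAndI φ ψ))) h1) h2

lemma dListAndMem {l : List Formula} {χ : Formula} (h : χ ∈ l) :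
    Deriv Ax ((listAnd l).imp χ) := by
  induction l with
  | nil => simp at h
  | cons a t ih =>
    rcases List.mem_cons.mp h with rfl | h
    · exact .axAndL _ _
    · exact dTrans (.axAndR _ _) (ih h)

lemma dListAndIntro {A : Formula} {l : List Formula}
    (h : ∀ χ ∈ l, Deriv Ax (A.imp χ)) : Deriv Ax (A.imp (listAnd l)) := by
  induction l with
  | nil => exact dConst _ dTop
  | cons a t ih => exact dAndICtx (h a (by simp)) (ih fun χ hχ => h χ (by simp [hχ]))

lemma dListOrMem {l : List Formula} {χ : Formula} (h : χ ∈ l) :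
    Deriv Ax (χ.imp (listOr l)) := by
  induction l with
  | nil => simp at h
  | cons a t ih =>
    rcases List.mem_cons.mp h with rfl | h
    · exact .axOrL _ _
    · exact dTrans (ih h) (.axOrR _ _)

/-- provability from a set of hypotheses -/
def Prov (Ax : Set Formula) (X : Set Formula) (ψ : Formula) : Prop :=
  ∃ l : List Formula, (∀ χ ∈ l, χ ∈ X) ∧ Deriv Ax ((listAnd l).imp ψ)

lemma provMem {X : Set Formula} {χ : Formula} (h : χ ∈ X) : Prov Ax X χ :=
  ⟨[χ], by simpa, .axAndL _ _⟩

lemma provThm {X : Set Formula} {ψ : Formula} (h : Deriv Ax ψ) : Prov Ax X ψ :=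
  ⟨[], by simp, dConst _ h⟩

lemma provMono {X Y : Set Formula} {ψ : Formula} (hXY : X ⊆ Y) (h : Prov Ax X ψ) :
    Prov Ax Y ψ := by
  obtain ⟨l, m, d⟩ := h
  exact ⟨l, fun χ hχ => hXY (m χ hχ), d⟩

lemma provMP {X : Set Formula} {φ ψ : Formula} (h1 : Prov Ax X (φ.imp ψ))
    (h2 : Prov Ax X φ) : Prov Ax X ψ := by
  obtain ⟨l1, m1, d1⟩ := h1; obtain ⟨l2, m2, d2⟩ := h2
  refine ⟨l1 ++ l2, ?_, ?_⟩
  · intro χ hχ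
    rcases List.mem_append.mp hχ with h | h
    · exact m1 χ h
    · exact m2 χ h
  · exact dApCtx
      (dTrans (dListAndIntro fun χ hχ => dListAndMem (by simp [hχ])) d1)
      (dTrans (dListAndIntro fun χ hχ => dListAndMem (by simp [hχ])) d2)

lemma dedAux (χ : Formula) : ∀ l : List Formula,
    Deriv Ax ((listAnd (l.filter (fun b => b ≠ χ))).imp (χ.imp (listAnd l)))
  | [] => dConst _ (dConst _ dTop)
  | a :: t => by
    by_cases ha : a = χ
    · subst ha
      rw [show (a :: t).filter (fun b => b ≠ a) = t.filter (fun b => b ≠ a) by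
        simp [List.filter_cons]]
      exact dAndICtx2 (dConst _ (dId _)) (dedAux a t)
    · rw [show (a :: t).filter (fun b => b ≠ χ) = a :: t.filter (fun b => b ≠ χ) by
        simp [List.filter_cons, ha]]
      exact dAndICtx2 (dTrans (.axAndL _ _) (.axK a χ))
        (dTrans (.axAndR _ _) (dedAux χ t))

lemma provDeduction {X : Set Formula} {χ ψ : Formula} (h : Prov Ax (X ∪ {χ}) ψ) :
    Prov Ax X (χ.imp ψ) := by
  obtain ⟨l, m, d⟩ := h
  refine ⟨l.filter (fun b => b ≠ χ), ?_, ?_⟩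
  · intro b hb
    have hb' := List.mem_filter.mp hb
    rcases m b hb'.1 with hX | hc
    · exact hX
    · exfalso
      have : b ≠ χ := by simpa using hb'.2
      exact this hc
  · exact dApCtx2 (dConst _ (dConst _ d)) (dedAux χ l)

lemma provCut {X : Set Formula} {χ ψ : Formula} (h1 : Prov Ax X χ)
    (h2 : Prov Ax (X ∪ {χ}) ψ) : Prov Ax X ψ :=
  provMP (provDeduction h2) h1

lemma provOrElim {X : Set Formula} {a b ψ : Formula} (hor : Prov Ax X (a.or b))
    (h1 : Prov Ax (X ∪ {a}) ψ) (h2 : Prov Ax (X ∪ {b}) ψ) : Prov Ax X ψ :=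
  provMP (provMP (provMP (provThm (.axOrE a b ψ)) (provDeduction h1))
    (provDeduction h2)) hor

end FMPAux
namespace FMPAux
open Formula

variable {Ax : Set Formula}

/-- a world of the canonical model: a deductively closed, prime, consistent theory -/
structure IsWorld (Ax : Set Formula) (T : Set Formula) : Prop where
  closed : ∀ χ, Prov Ax T χ → χ ∈ T
  prime : ∀ a b : Formula, a.or b ∈ T → a ∈ T ∨ b ∈ T
  cons : Formula.bot ∉ T

lemma chain_list {c : Set (Set Formula)} (hc : IsChain (· ⊆ ·) c) (hne : c.Nonempty) :
    ∀ l : List Formula, (∀ χ ∈ l, χ ∈ ⋃₀ c) → ∃ y ∈ c, ∀ χ ∈ l, χ ∈ y := by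
  intro l
  induction l with
  | nil => exact fun _ => ⟨hne.choose, hne.choose_spec, by simp⟩
  | cons a t ih =>
    intro hm
    obtain ⟨y, hy, hty⟩ := ih (fun χ hχ => hm χ (by simp [hχ]))
    obtain ⟨z, hz, haz⟩ := hm a (by simp)
    rcases eq_or_ne y z with rfl | hne'
    · refine ⟨y, hy, fun χ hχ => ?_⟩
      rcases List.mem_cons.mp hχ with rfl | hχ
      · exact haz
      · exact hty χ hχ
    rcases hc.total hy hz with hyz | hzy
    · refine ⟨z, hz, fun χ hχ => ?_⟩
      rcases List.mem_cons.mp hχ with rfl | hχ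
      · exact haz
      · exact hyz (hty χ hχ)
    · refine ⟨y, hy, fun χ hχ => ?_⟩
      rcases List.mem_cons.mp hχ with rfl | hχ
      · exact hzy haz
      · exact hty χ hχ

lemma lindenbaum {X : Set Formula} {ψ : Formula} (h : ¬ Prov Ax X ψ) :
    ∃ T : Set Formula, X ⊆ T ∧ IsWorld Ax T ∧ ψ ∉ T := by
  have Hc : ∀ c ⊆ {Y | X ⊆ Y ∧ ¬ Prov Ax Y ψ}, IsChain (· ⊆ ·) c → c.Nonempty →
      ∃ ub ∈ {Y | X ⊆ Y ∧ ¬ Prov Ax Y ψ}, ∀ s ∈ c, s ⊆ ub := by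
    intro c hcS hchain hcne
    refine ⟨⋃₀ c, ⟨?_, ?_⟩, fun s hs => Set.subset_sUnion_of_mem hs⟩
    · obtain ⟨y, hy⟩ := hcne
      exact (hcS hy).1.trans (Set.subset_sUnion_of_mem hy)
    · rintro ⟨l, m, d⟩
      obtain ⟨y, hy, hl⟩ := chain_list hchain hcne l m
      exact (hcS hy).2 ⟨l, hl, d⟩
  obtain ⟨T, hXT, hmax⟩ := zorn_subset_nonempty {Y | X ⊆ Y ∧ ¬ Prov Ax Y ψ} Hc X ⟨subset_rfl, h⟩
  · obtain ⟨hXT', hT⟩ := hmax.prop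
    have key : ∀ χ, ¬ Prov Ax (T ∪ {χ}) ψ → χ ∈ T := by
      intro χ hχ
      have hsub : T ⊆ T ∪ {χ} := Set.subset_union_left
      have := hmax.2 (y := T ∪ {χ}) ⟨hXT'.trans hsub, hχ⟩ hsub
      exact this (by simp)
    have closed : ∀ χ, Prov Ax T χ → χ ∈ T := by
      intro χ hχ
      exact key χ (fun hp => hT (provCut hχ hp))
    refine ⟨T, hXT', ⟨closed, ?_, ?_⟩, ?_⟩
    · intro a b hab
      by_contra hcon
      push_neg at hcon
      have ha : Prov Ax (T ∪ {a}) ψ := by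
        by_contra hpa; exact hcon.1 (key a hpa)
      have hb : Prov Ax (T ∪ {b}) ψ := by
        by_contra hpb; exact hcon.2 (key b hpb)
      exact hT (provOrElim (provMem hab) ha hb)
    · intro hbot
      exact hT (provMP (provThm (.axBot ψ)) (provMem hbot))
    · intro hψ
      exact hT (provMem hψ)

/-- the worlds of the canonical model -/
def canonW (Ax : Set Formula) := {T : Set Formula // IsWorld Ax T}

open Classical in
/-- the canonical model -/
noncomputable def canon (Ax : Set Formula) : KStruct where
  W := canonW Ax
  R := fun T T' => T.1 ⊆ T'.1
  V := fun T p => decide (Formula.var p ∈ T.1)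

lemma canon_isModel : (canon Ax).IsModel := by
  refine ⟨fun w => subset_rfl, fun w u v h1 h2 => h1.trans h2,
    fun w u h1 h2 => Subtype.ext (subset_antisymm h1 h2), ?_⟩
  intro w u p hR hV
  simp only [canon, decide_eq_true_eq] at hV ⊢
  exact hR hV

section worldFacts
variable {T : Set Formula}

lemma thm_mem (hT : IsWorld Ax T) {χ : Formula} (h : Deriv Ax χ) : χ ∈ T := hT.closed _ (provThm h)

lemma mem_of_mp (hT : IsWorld Ax T) {a b : Formula} (hi : a.imp b ∈ T) (ha : a ∈ T) : b ∈ T :=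
  hT.closed _ (provMP (provMem hi) (provMem ha))

lemma and_mem_iff (hT : IsWorld Ax T) {a b : Formula} : a.and b ∈ T ↔ a ∈ T ∧ b ∈ T := by
  constructor
  · intro hab
    exact ⟨mem_of_mp hT (thm_mem hT (.axAndL a b)) hab,
      mem_of_mp hT (thm_mem hT (.axAndR a b)) hab⟩
  · rintro ⟨ha, hb⟩
    exact hT.closed _ (provMP (provMP (provThm (.axAndI a b)) (provMem ha)) (provMem hb))

lemma or_mem_iff (hT : IsWorld Ax T) {a b : Formula} : a.or b ∈ T ↔ a ∈ T ∨ b ∈ T := by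
  constructor
  · exact hT.prime a b
  · rintro (ha | hb)
    · exact mem_of_mp hT (thm_mem hT (.axOrL a b)) ha
    · exact mem_of_mp hT (thm_mem hT (.axOrR a b)) hb

lemma listAnd_mem_iff (hT : IsWorld Ax T) {l : List Formula} : listAnd l ∈ T ↔ ∀ χ ∈ l, χ ∈ T := by
  constructor
  · intro hl χ hχ
    exact mem_of_mp hT (thm_mem hT (dListAndMem hχ)) hl
  · intro hl
    exact hT.closed _ ⟨l, hl, dId _⟩

lemma listOr_mem_iff (hT : IsWorld Ax T) {l : List Formula} : listOr l ∈ T ↔ ∃ χ ∈ l, χ ∈ T := by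
  constructor
  · intro hl
    induction l with
    | nil => exact absurd hl hT.cons
    | cons a t ih =>
      rcases hT.prime a (listOr t) hl with ha | ht
      · exact ⟨a, by simp, ha⟩
      · obtain ⟨χ, hχ, hχT⟩ := ih ht
        exact ⟨χ, by simp [hχ], hχT⟩
  · rintro ⟨χ, hχ, hχT⟩
    exact mem_of_mp hT (thm_mem hT (dListOrMem hχ)) hχT

lemma imp_not_mem (hT : IsWorld Ax T) {a b : Formula} (h : a.imp b ∉ T) :
    ∃ T' : canonW Ax, T ⊆ T'.1 ∧ a ∈ T'.1 ∧ b ∉ T'.1 := by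
  have hnp : ¬ Prov Ax (T ∪ {a}) b := fun hp => h (hT.closed _ (provDeduction hp))
  obtain ⟨T', hsub, hw, hb⟩ := lindenbaum hnp
  exact ⟨⟨T', hw⟩, Set.subset_union_left.trans hsub, hsub (by simp), hb⟩

end worldFacts

lemma canon_truth : ∀ (χ : Formula) (T : canonW Ax), (canon Ax).sat T χ ↔ χ ∈ T.1 := by
  intro χ
  induction χ with
  | bot =>
    intro T
    simp only [KStruct.sat]
    exact ⟨fun h => h.elim, fun h => T.2.cons h⟩
  | var p =>
    intro T
    simp [KStruct.sat, canon]
  | and a b iha ihb =>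
    intro T
    simp only [KStruct.sat]
    rw [iha, ihb]
    exact (and_mem_iff T.2).symm
  | or a b iha ihb =>
    intro T
    simp only [KStruct.sat]
    rw [iha, ihb]
    exact (or_mem_iff T.2).symm
  | imp a b iha ihb =>
    intro T
    constructor
    · intro hs
      by_contra hmem
      obtain ⟨T', hsub, ha, hb⟩ := imp_not_mem T.2 hmem
      exact hb ((ihb T').mp (hs T' hsub ((iha T').mpr ha)))
    · intro hmem T' hR ha
      exact (ihb T').mpr (mem_of_mp T'.2 (hR hmem) ((iha T').mp ha))

end FMPAux
namespace FMPAux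
open Formula

variable {Ax : Set Formula}

/-- subformulas -/
def subF : Formula → Finset Formula
  | .bot => {.bot}
  | .var p => {.var p}
  | .and a b => insert (Formula.and a b) (subF a ∪ subF b)
  | .or a b => insert (Formula.or a b) (subF a ∪ subF b)
  | .imp a b => insert (Formula.imp a b) (subF a ∪ subF b)

lemma self_mem_subF (χ : Formula) : χ ∈ subF χ := by
  cases χ <;> simp [subF]

lemma subF_closed : ∀ χ : Formula, ∀ ψ ∈ subF χ, subF ψ ⊆ subF χ := by
  intro χ
  induction χ with
  | bot => intro ψ hψ; simp [subF] at hψ; subst hψ; exact subset_rfl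
  | var p => intro ψ hψ; simp [subF] at hψ; subst hψ; exact subset_rfl
  | and a b iha ihb =>
    intro ψ hψ
    rcases Finset.mem_insert.mp hψ with rfl | hψ
    · exact subset_rfl
    rcases Finset.mem_union.mp hψ with h | h
    · exact (iha ψ h).trans ((Finset.subset_union_left).trans (Finset.subset_insert _ _))
    · exact (ihb ψ h).trans ((Finset.subset_union_right).trans (Finset.subset_insert _ _))
  | or a b iha ihb =>
    intro ψ hψ
    rcases Finset.mem_insert.mp hψ with rfl | hψ
    · exact subset_rfl
    rcases Finset.mem_union.mp hψ with h | h
    · exact (iha ψ h).trans ((Finset.subset_union_left).trans (Finset.subset_insert _ _))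
    · exact (ihb ψ h).trans ((Finset.subset_union_right).trans (Finset.subset_insert _ _))
  | imp a b iha ihb =>
    intro ψ hψ
    rcases Finset.mem_insert.mp hψ with rfl | hψ
    · exact subset_rfl
    rcases Finset.mem_union.mp hψ with h | h
    · exact (iha ψ h).trans ((Finset.subset_union_left).trans (Finset.subset_insert _ _))
    · exact (ihb ψ h).trans ((Finset.subset_union_right).trans (Finset.subset_insert _ _))

lemma and_subF {φ a b : Formula} (h : Formula.and a b ∈ subF φ) :
    a ∈ subF φ ∧ b ∈ subF φ := by
  have h2 := subF_closed φ _ h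
  exact ⟨h2 (by simp [subF, Finset.mem_insert, self_mem_subF a]),
    h2 (by simp [subF, Finset.mem_insert, self_mem_subF b])⟩

lemma or_subF {φ a b : Formula} (h : Formula.or a b ∈ subF φ) :
    a ∈ subF φ ∧ b ∈ subF φ := by
  have h2 := subF_closed φ _ h
  exact ⟨h2 (by simp [subF, Finset.mem_insert, self_mem_subF a]),
    h2 (by simp [subF, Finset.mem_insert, self_mem_subF b])⟩

lemma imp_subF {φ a b : Formula} (h : Formula.imp a b ∈ subF φ) :
    a ∈ subF φ ∧ b ∈ subF φ := by
  have h2 := subF_closed φ _ h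
  constructor
  · exact h2 (by simp [subF, Finset.mem_insert, self_mem_subF a])
  · exact h2 (by simp [subF, Finset.mem_insert, self_mem_subF b])

open Classical in
/-- the witness for an unrealized implication (or the point itself) -/
noncomputable def gwit (Ax : Set Formula) (T : canonW Ax) (χ : Formula) : canonW Ax :=
  match χ with
  | .imp a b =>
    if h : (Formula.imp a b) ∉ T.1 ∧ (a ∉ T.1 ∨ b ∈ T.1) then
      (imp_not_mem T.2 h.1).choose
    else T
  | _ => T

lemma gwit_sub (T : canonW Ax) (χ : Formula) : T.1 ⊆ (gwit Ax T χ).1 := by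
  cases χ <;> simp only [gwit]
  any_goals exact subset_rfl
  split
  · next h => exact (imp_not_mem T.2 h.1).choose_spec.1
  · exact subset_rfl

lemma gwit_spec {T : canonW Ax} {a b : Formula} (h : Formula.imp a b ∉ T.1) :
    T.1 ⊆ (gwit Ax T (.imp a b)).1 ∧ a ∈ (gwit Ax T (.imp a b)).1 ∧
      b ∉ (gwit Ax T (.imp a b)).1 := by
  simp only [gwit]
  split
  · next h' => exact (imp_not_mem T.2 h'.1).choose_spec
  · next h' =>
    push_neg at h'
    obtain ⟨ha, hb⟩ := h' h
    exact ⟨subset_rfl, ha, hb⟩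

open Classical in
/-- the trace of a world on the subformulas of `φ` -/
noncomputable def tr (φ : Formula) (T : canonW Ax) : Finset Formula :=
  (subF φ).filter (fun χ => χ ∈ T.1)

lemma tr_mono {φ : Formula} {T T' : canonW Ax} (h : T.1 ⊆ T'.1) : tr φ T ⊆ tr φ T' := by
  intro χ hχ
  simp only [tr, Finset.mem_filter] at hχ ⊢
  exact ⟨hχ.1, h hχ.2⟩

lemma gwit_grow {φ : Formula} {T : canonW Ax} {χ : Formula} (hχ : χ ∈ subF φ) :
    gwit Ax T χ = T ∨ tr φ T ⊂ tr φ (gwit Ax T χ) := by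
  cases χ with
  | imp a b =>
    by_cases h : (Formula.imp a b) ∉ T.1 ∧ (a ∉ T.1 ∨ b ∈ T.1)
    · right
      obtain ⟨hsub, ha, hb⟩ := gwit_spec (T := T) h.1
      have haT : a ∉ T.1 := by
        rcases h.2 with h' | h'
        · exact h'
        · exact fun _ => hb (hsub h')
      refine (Finset.ssubset_iff_of_subset (tr_mono hsub)).mpr ⟨a, ?_, ?_⟩
      · simp only [tr, Finset.mem_filter]
        exact ⟨(imp_subF hχ).1, ha⟩
      · simp only [tr, Finset.mem_filter]
        exact fun hc => haT hc.2
    · left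
      simp only [gwit]
      split
      · next h' => exact absurd h' h
      · rfl
  | bot => left; rfl
  | var p => left; rfl
  | and a b => left; rfl
  | or a b => left; rfl

/-- the finite selective levels -/
noncomputable def lvl (Ax : Set Formula) (φ : Formula) (w0 : canonW Ax) : ℕ → Set (canonW Ax)
  | 0 => {w0}
  | k+1 => lvl Ax φ w0 k ∪ ⋃ T ∈ lvl Ax φ w0 k, (gwit Ax T) '' (subF φ : Set Formula)

lemma lvl_mono (φ : Formula) (w0 : canonW Ax) (k : ℕ) :
    lvl Ax φ w0 k ⊆ lvl Ax φ w0 (k+1) := Set.subset_union_left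

lemma lvl_finite (φ : Formula) (w0 : canonW Ax) : ∀ k, (lvl Ax φ w0 k).Finite := by
  intro k
  induction k with
  | zero => exact Set.finite_singleton _
  | succ k ih =>
    refine ih.union (Set.Finite.biUnion ih (fun T _ => ?_))
    exact ((subF φ).finite_toSet).image _

lemma lvl_mem_succ {φ : Formula} {w0 : canonW Ax} {k : ℕ} {T : canonW Ax}
    (h : T ∈ lvl Ax φ w0 (k+1)) :
    T ∈ lvl Ax φ w0 k ∨ ∃ T0 ∈ lvl Ax φ w0 k, ∃ χ ∈ subF φ, T = gwit Ax T0 χ := by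
  rcases h with h | h
  · exact Or.inl h
  · right
    simp only [Set.mem_iUnion] at h
    obtain ⟨T0, hT0, χ, hχ, rfl⟩ := h
    exact ⟨T0, hT0, χ, hχ, rfl⟩

lemma lvl_rank (φ : Formula) (w0 : canonW Ax) :
    ∀ k, ∀ T ∈ lvl Ax φ w0 (k+1), T ∈ lvl Ax φ w0 k ∨ k+1 ≤ (tr φ T).card := by
  intro k
  induction k with
  | zero =>
    intro T hT
    rcases lvl_mem_succ hT with h | ⟨T0, hT0, χ, hχ, rfl⟩
    · exact Or.inl h
    rcases gwit_grow (T := T0) hχ with he | hlt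
    · rw [he]; exact Or.inl hT0
    · exact Or.inr (Nat.one_le_iff_ne_zero.mpr (fun hc => by
        have := Finset.card_lt_card hlt
        omega))
  | succ k ih =>
    intro T hT
    rcases lvl_mem_succ hT with h | ⟨T0, hT0, χ, hχ, rfl⟩
    · exact Or.inl h
    rcases gwit_grow (T := T0) hχ with he | hlt
    · rw [he]
      exact Or.inl hT0
    · rcases ih T0 hT0 with h0 | h0
      · left
        right
        simp only [Set.mem_iUnion]
        exact ⟨T0, h0, χ, hχ, rfl⟩
      · right
        have := Finset.card_lt_card hlt
        omega

/-- the finite adequate set of worlds -/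
noncomputable def selS (Ax : Set Formula) (φ : Formula) (w0 : canonW Ax) : Set (canonW Ax) :=
  lvl Ax φ w0 ((subF φ).card + 1)

lemma selS_finite (φ : Formula) (w0 : canonW Ax) : (selS Ax φ w0).Finite :=
  lvl_finite φ w0 _

lemma selS_mem_w0 (φ : Formula) (w0 : canonW Ax) : w0 ∈ selS Ax φ w0 := by
  have : ∀ k, w0 ∈ lvl Ax φ w0 k := by
    intro k
    induction k with
    | zero => exact rfl
    | succ k ih => exact lvl_mono φ w0 k ih
  exact this _

open Classical in
lemma lvl_stable (φ : Formula) (w0 : canonW Ax) :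
    ∀ T ∈ selS Ax φ w0, T ∈ lvl Ax φ w0 ((subF φ).card) := by
  intro T hT
  rcases lvl_rank φ w0 _ T hT with h | h
  · exact h
  · exfalso
    have hcard : (tr φ T).card ≤ (subF φ).card :=
      Finset.card_le_card (Finset.filter_subset _ _)
    omega

lemma selS_saturated (φ : Formula) (w0 : canonW Ax) {T : canonW Ax}
    (hT : T ∈ selS Ax φ w0) {a b : Formula} (hab : Formula.imp a b ∈ subF φ)
    (hnm : Formula.imp a b ∉ T.1) :
    ∃ T' ∈ selS Ax φ w0, T.1 ⊆ T'.1 ∧ a ∈ T'.1 ∧ b ∉ T'.1 := by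
  refine ⟨gwit Ax T (.imp a b), ?_, gwit_spec hnm⟩
  right
  simp only [Set.mem_iUnion]
  exact ⟨T, lvl_stable φ w0 T hT, Formula.imp a b, hab, rfl⟩

/-- truth lemma for the selective submodel -/
lemma sub_truth (φ : Formula) (w0 : canonW Ax) :
    ∀ χ, χ ∈ subF φ → ∀ T : ↥(selS Ax φ w0),
      ((canon Ax).restrict (selS Ax φ w0)).sat T χ ↔ χ ∈ T.1.1 := by
  intro χ
  induction χ with
  | bot =>
    intro _ T
    simp only [KStruct.restrict, KStruct.sat]
    exact ⟨fun h => h.elim, fun h => T.1.2.cons h⟩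
  | var p =>
    intro _ T
    simp [KStruct.restrict, KStruct.sat, canon]
  | and a b iha ihb =>
    intro hχ T
    have ha := (and_subF hχ).1
    have hb := (and_subF hχ).2
    simp only [KStruct.sat]
    rw [iha ha, ihb hb]
    exact (and_mem_iff T.1.2).symm
  | or a b iha ihb =>
    intro hχ T
    have ha := (or_subF hχ).1
    have hb := (or_subF hχ).2
    simp only [KStruct.sat]
    rw [iha ha, ihb hb]
    exact (or_mem_iff T.1.2).symm
  | imp a b iha ihb =>
    intro hχ T
    have ha := (imp_subF hχ).1
    have hb := (imp_subF hχ).2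
    constructor
    · intro hs
      by_contra hmem
      obtain ⟨T', hT'S, hsub, haT, hbT⟩ := selS_saturated φ w0 T.2 hχ hmem
      have := hs ⟨T', hT'S⟩ hsub ((iha ha ⟨T', hT'S⟩).mpr haT)
      exact hbT ((ihb hb ⟨T', hT'S⟩).mp this)
    · intro hmem T' hR hsa
      exact (ihb hb T').mpr (mem_of_mp T'.1.2 (hR hmem) ((iha ha T').mp hsa))

end FMPAux
namespace FMPAux
open Formula

lemma sat_mono {M : KStruct} (hM : M.IsModel) :
    ∀ (χ : Formula) {w u : M.W}, M.R w u → M.sat w χ → M.sat u χ := by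
  intro χ
  induction χ with
  | bot => intro w u _ h; exact h.elim
  | var p => intro w u hR h; exact hM.2.2.2 w u p hR h
  | and a b iha ihb => intro w u hR h; exact ⟨iha hR h.1, ihb hR h.2⟩
  | or a b iha ihb =>
    intro w u hR h
    rcases h with h | h
    · exact Or.inl (iha hR h)
    · exact Or.inr (ihb hR h)
  | imp a b iha ihb =>
    intro w u hR h v hv ha
    exact h v (hM.2.1 w u v hR hv) ha

open Classical in
/-- the model with the same frame whose valuation is given by truth of `σ p` -/
noncomputable def substModel (M : KStruct) (σ : ℕ → Formula) : KStruct :=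
  ⟨M.W, M.R, fun w p => decide (M.sat w (σ p))⟩

lemma sat_subst (M : KStruct) (σ : ℕ → Formula) :
    ∀ (χ : Formula) (w : M.W), M.sat w (χ.subst σ) ↔ (substModel M σ).sat w χ := by
  intro χ
  induction χ with
  | bot => intro w; exact Iff.rfl
  | var p =>
    intro w
    simp [Formula.subst, substModel, KStruct.sat]
  | and a b iha ihb =>
    intro w
    simp only [Formula.subst, KStruct.sat]
    rw [iha, ihb]
  | or a b iha ihb =>
    intro w
    simp only [Formula.subst, KStruct.sat]
    rw [iha, ihb]
  | imp a b iha ihb =>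
    intro w
    simp only [Formula.subst, KStruct.sat]
    constructor
    · intro h u hu ha
      exact (ihb u).mp (h u hu ((iha u).mpr ha))
    · intro h u hu ha
      exact (ihb u).mpr (h u hu ((iha u).mp ha))

lemma substModel_isModel {M : KStruct} (hM : M.IsModel) (σ : ℕ → Formula) :
    (substModel M σ).IsModel := by
  refine ⟨hM.1, hM.2.1, hM.2.2.1, ?_⟩
  intro w u p hR hV
  simp only [substModel, decide_eq_true_eq] at hV ⊢
  exact sat_mono hM _ hR hV

lemma noImp_restrict {M : KStruct} {S : Set M.W} :
    ∀ {χ : Formula}, χ.noImp → ∀ (t : ↥S), ((M.restrict S).sat t χ ↔ M.sat t.1 χ) := by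
  intro χ
  induction χ with
  | bot => intro _ t; exact Iff.rfl
  | var p => intro _ t; exact Iff.rfl
  | and a b iha ihb =>
    intro h t
    simp only [KStruct.sat]
    rw [iha h.1, ihb h.2]
  | or a b iha ihb =>
    intro h t
    simp only [KStruct.sat]
    rw [iha h.1, ihb h.2]
  | imp a b _ _ => intro h; exact h.elim

lemma nnil_restrict {M : KStruct} {S : Set M.W} :
    ∀ {χ : Formula}, χ.IsNNIL → ∀ (t : ↥S), M.sat t.1 χ → (M.restrict S).sat t χ := by
  intro χ
  induction χ with
  | bot => intro _ t h; exact h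
  | var p => intro _ t h; exact h
  | and a b iha ihb => intro hn t h; exact ⟨iha hn.1 t h.1, ihb hn.2 t h.2⟩
  | or a b iha ihb =>
    intro hn t h
    rcases h with h | h
    · exact Or.inl (iha hn.1 t h)
    · exact Or.inr (ihb hn.2 t h)
  | imp a b _ ihb =>
    intro hn t h u hu ha
    exact ihb hn.2 u (h u.1 hu ((noImp_restrict hn.1 u).mp ha))

lemma sat_of_V_eq {Wt : Type} {R : Wt → Wt → Prop} {V1 V2 : Wt → ℕ → Bool}
    (h : ∀ w p, V1 w p = V2 w p) :
    ∀ (χ : Formula) (w : Wt),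
      KStruct.sat ⟨Wt, R, V1⟩ w χ ↔ KStruct.sat ⟨Wt, R, V2⟩ w χ := by
  intro χ
  induction χ with
  | bot => intro w; exact Iff.rfl
  | var p =>
    intro w
    simp only [KStruct.sat]
    rw [h w p]
  | and a b iha ihb =>
    intro w
    simp only [KStruct.sat]
    rw [iha w, ihb w]
  | or a b iha ihb =>
    intro w
    simp only [KStruct.sat]
    rw [iha w, ihb w]
  | imp a b iha ihb =>
    intro w
    simp only [KStruct.sat]
    constructor
    · intro hs u hu ha
      exact (ihb u).mp (hs u hu ((iha u).mpr ha))
    · intro hs u hu ha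
      exact (ihb u).mpr (hs u hu ((iha u).mp ha))

/-- soundness of the intuitionistic axioms and rules on frames -/
lemma frame_valid_of_deriv {Ax : Set Formula} (F : KFrame) (hF : F.IsFrame)
    (hAx : ∀ γ ∈ Ax, F.valid γ) : ∀ ψ, Deriv Ax ψ → F.valid ψ := by
  have hMod : ∀ V, F.Persistent V → (F.model V).IsModel := by
    intro V hV
    exact ⟨hF.1, hF.2.1, hF.2.2, hV⟩
  intro ψ hd
  induction hd with
  | axK a b =>
    intro V hV w u _ ha v hv _
    exact sat_mono (hMod V hV) a hv ha
  | axS a b c =>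
    intro V hV w u _ h1 v hv h2 x hx h3
    have hM := hMod V hV
    exact h1 x (hM.2.1 _ _ _ hv hx) h3 x (hM.1 x) (h2 x hx h3)
  | axAndI a b =>
    intro V hV w u _ ha v hv hb
    exact ⟨sat_mono (hMod V hV) a hv ha, hb⟩
  | axAndL a b => intro V hV w u _ hab; exact hab.1
  | axAndR a b => intro V hV w u _ hab; exact hab.2
  | axOrL a b => intro V hV w u _ ha; exact Or.inl ha
  | axOrR a b => intro V hV w u _ hb; exact Or.inr hb
  | axOrE a b c =>
    intro V hV w u _ h1 v hv h2 x hx h3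
    have hM := hMod V hV
    rcases h3 with h3 | h3
    · exact h1 x (hM.2.1 _ _ _ hv hx) h3
    · exact h2 x hx h3
  | axBot a => intro V hV w u _ hbot; exact hbot.elim
  | hyp a ha => exact hAx a ha
  | mp a b _ _ ih1 ih2 =>
    intro V hV w
    exact ih1 V hV w w (hF.1 w) (ih2 V hV w)
  | subst a σ _ ih =>
    intro V hV w
    have hM := hMod V hV
    rw [show (F.model V).sat w (a.subst σ) ↔ (substModel (F.model V) σ).sat w a from
      sat_subst (F.model V) σ a w]
    have hper : F.Persistent (substModel (F.model V) σ).V := by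
      intro w u p hR hVp
      simp only [substModel, decide_eq_true_eq] at hVp ⊢
      exact sat_mono hM _ hR hVp
    exact ih (substModel (F.model V) σ).V hper w

end FMPAux
namespace FMPAux
open Formula

/-- the canonical frame -/
noncomputable def canonF (Ax : Set Formula) : KFrame := ⟨(canon Ax).W, (canon Ax).R⟩

lemma restrict_isFrame {Ax : Set Formula} (S : Set (canonW Ax)) :
    (KFrame.restrictF (canonF Ax) S).IsFrame := by
  refine ⟨fun w => ?_, fun w u v h1 h2 => ?_, fun w u h1 h2 => ?_⟩
  · exact subset_rfl
  · exact Set.Subset.trans h1 h2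
  · exact Subtype.ext (Subtype.ext (subset_antisymm h1 h2))

open Classical in
/-- key lemma: every NNIL axiom is valid on the restriction of the canonical frame
to any finite set of worlds -/
lemma gamma_valid {Ax : Set Formula} {γ : Formula} (hγ : γ ∈ Ax) (hn : γ.IsNNIL)
    {S : Set (canonW Ax)} (hS : S.Finite) :
    (KFrame.restrictF (canonF Ax) S).valid γ := by
  intro V' hV' w
  haveI := hS.fintype
  let LS : List (↥S) := Finset.univ.toList
  have hLS : ∀ t : ↥S, t ∈ LS := fun t => Finset.mem_toList.mpr (Finset.mem_univ t)
  let sep : ↥S → ↥S → Formula := fun T T'' =>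
    if hsub : T.1.1 ⊆ T''.1.1 then Formula.top else (Set.not_subset.mp hsub).choose
  have sep_self : ∀ T T'' : ↥S, sep T T'' ∈ T.1.1 := by
    intro T T''
    by_cases hsub : T.1.1 ⊆ T''.1.1
    · show (if hsub : T.1.1 ⊆ T''.1.1 then Formula.top
        else (Set.not_subset.mp hsub).choose) ∈ T.1.1
      rw [dif_pos hsub]
      exact thm_mem T.1.2 dTop
    · show (if hsub : T.1.1 ⊆ T''.1.1 then Formula.top
        else (Set.not_subset.mp hsub).choose) ∈ T.1.1
      rw [dif_neg hsub]
      exact (Set.not_subset.mp hsub).choose_spec.1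
  have sep_out : ∀ T T'' : ↥S, ¬ T.1.1 ⊆ T''.1.1 → sep T T'' ∉ T''.1.1 := by
    intro T T'' hsub
    show (if hsub : T.1.1 ⊆ T''.1.1 then Formula.top
      else (Set.not_subset.mp hsub).choose) ∉ T''.1.1
    rw [dif_neg hsub]
    exact (Set.not_subset.mp hsub).choose_spec.2
  let χf : ↥S → Formula := fun T => listAnd (LS.map (sep T))
  let σ : ℕ → Formula := fun p => listOr ((LS.filter (fun T => V' T p)).map χf)
  have claim1 : ∀ (T' : ↥S) (p : ℕ),
      listOr ((LS.filter (fun T => V' T p)).map χf) ∈ T'.1.1 ↔ V' T' p = true := by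
    intro T' p
    rw [listOr_mem_iff T'.1.2]
    constructor
    · rintro ⟨χ, hχ, hmem⟩
      obtain ⟨T, hTf, rfl⟩ := List.mem_map.mp hχ
      have hTfil := List.mem_filter.mp hTf
      have hVp : V' T p = true := hTfil.2
      by_cases hsub : T.1.1 ⊆ T'.1.1
      · exact hV' T T' p hsub hVp
      · exfalso
        have hin : sep T T' ∈ T'.1.1 :=
          (listAnd_mem_iff T'.1.2).mp hmem _ (List.mem_map.mpr ⟨T', hLS T', rfl⟩)
        exact sep_out T T' hsub hin
    · intro hVp
      refine ⟨χf T', List.mem_map.mpr ⟨T', List.mem_filter.mpr ⟨hLS T', hVp⟩, rfl⟩, ?_⟩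
      refine (listAnd_mem_iff T'.1.2).mpr ?_
      intro χ hχ
      obtain ⟨T'', _, rfl⟩ := List.mem_map.mp hχ
      exact sep_self T' T''
  have hsubst : (γ.subst σ) ∈ w.1.1 :=
    thm_mem w.1.2 (Deriv.subst γ σ (Deriv.hyp γ hγ))
  have hsat : (canon Ax).sat w.1 (γ.subst σ) := (canon_truth _ w.1).mpr hsubst
  have hsat2 : (substModel (canon Ax) σ).sat w.1 γ := (sat_subst _ σ γ w.1).mp hsat
  have hsat3 : ((substModel (canon Ax) σ).restrict S).sat w γ := nnil_restrict (M := substModel (canon Ax) σ) hn w hsat2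
  have hVeq : ∀ (t : ↥S) (p : ℕ),
      ((substModel (canon Ax) σ).restrict S).V t p = V' t p := by
    intro t p
    show decide ((canon Ax).sat t.1 (σ p)) = V' t p
    have hiff : (canon Ax).sat t.1 (σ p) ↔ V' t p = true := by
      rw [canon_truth (σ p) t.1]
      exact claim1 t p
    cases hv : V' t p
    · exact decide_eq_false (fun hp => by rw [hiff.mp hp] at hv; exact Bool.noConfusion hv)
    · exact decide_eq_true (hiff.mpr hv)
  exact (sat_of_V_eq hVeq γ w).mp hsat3

end FMPAux
/-- every intermediate logic axiomatized by NNIL-formulas has the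
finite model property. -/
theorem nnil_logics_have_fmp (Γ : Set Formula) (hΓ : ∀ γ ∈ Γ, γ.IsNNIL)
    (φ : Formula) (h : ¬ Deriv Γ φ) :
    ∃ F : KFrame, Finite F.W ∧ F.IsFrame ∧
      (∀ ψ : Formula, Deriv Γ ψ → F.valid ψ) ∧
      ∃ V : F.W → ℕ → Bool, F.Persistent V ∧
        ∃ w : F.W, ¬ (F.model V).sat w φ := by
  classical
  have hnp : ¬ FMPAux.Prov Γ ∅ φ := by
    rintro ⟨l, m, d⟩
    have hl : l = [] := List.eq_nil_iff_forall_not_mem.mpr (fun a ha => (m a ha).elim)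
    subst hl
    exact h (Deriv.mp _ _ d FMPAux.dTop)
  obtain ⟨T0, -, hw0, hφ0⟩ := FMPAux.lindenbaum hnp
  let w0 : FMPAux.canonW Γ := ⟨T0, hw0⟩
  have hSfin := FMPAux.selS_finite (Ax := Γ) φ w0
  refine ⟨KFrame.restrictF (FMPAux.canonF Γ) (FMPAux.selS Γ φ w0),
    hSfin.to_subtype, FMPAux.restrict_isFrame _, ?_, ?_⟩
  · intro ψ hψ
    refine FMPAux.frame_valid_of_deriv _ (FMPAux.restrict_isFrame _) ?_ ψ hψ
    intro γ hγ
    exact FMPAux.gamma_valid hγ (hΓ γ hγ) hSfin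
  · refine ⟨fun T p => (FMPAux.canon Γ).V T.1 p, ?_, ?_⟩
    · intro u v p hR hV
      simp only [FMPAux.canon, decide_eq_true_eq] at hV ⊢
      exact hR hV
    · refine ⟨⟨w0, FMPAux.selS_mem_w0 φ w0⟩, fun hsat => ?_⟩
      exact hφ0 ((FMPAux.sub_truth φ w0 φ (FMPAux.self_mem_subF φ)
        ⟨w0, FMPAux.selS_mem_w0 φ w0⟩).mp hsat)
end
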